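/- arXiv:2401.09587 — 13 statements merged into one kernel-verified Lean document; each statement's English description precedes it below -/
import Mathlib

section
/- Let L₀, L₁ > 0 and let f : ℝ^{d_x} × ℝ^{d_y} → ℝ be differentiable. Suppose that for all u = (x, y) and u' = (x', y') with ‖u − u'‖ ≤ 1/L₁ one has ‖∇_x f(u) − ∇_x f(u')‖ ≤ (L₀/2 + (L₁/2)‖∇_x f(u)‖)·‖u − u'‖ and ‖∇_y f(u) − ∇_y f(u')‖ ≤ (L₀/2 + (L₁/2)‖∇_y f(u)‖)·‖u − u'‖. Then for all u, u' with ‖u − u'‖ ≤ 1/L₁, the full gradient satisfies ‖∇f(u) − ∇f(u')‖ ≤ (L₀ + L₁‖∇f(u)‖)·‖u − u'‖. -/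
/-!
STATEMENT 0: If `f : ℝ^{d_x} × ℝ^{d_y} → ℝ` is differentiable and its partial gradients
satisfy the `(L₀/2, L₁/2, L₀/2, L₁/2)`-relaxed smoothness conditions for pairs of points at
(ℓ²-product) distance at most `1/L₁`, then the full gradient
`∇f(u) = (∇_x f(u), ∇_y f(u))` satisfies
`‖∇f(u) − ∇f(u')‖ ≤ (L₀ + L₁‖∇f(u)‖)·‖u − u'‖` whenever `‖u − u'‖ ≤ 1/L₁`.
Here the product norm is `‖(a,b)‖ = √(‖a‖² + ‖b‖²)`.
-/

/-- Partial gradient of `f` with respect to the first block of variables. -/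
noncomputable def gradx {dx dy : ℕ}
    (f : EuclideanSpace ℝ (Fin dx) → EuclideanSpace ℝ (Fin dy) → ℝ)
    (x : EuclideanSpace ℝ (Fin dx)) (y : EuclideanSpace ℝ (Fin dy)) : EuclideanSpace ℝ (Fin dx) :=
  gradient (fun x' => f x' y) x

/-- Partial gradient of `f` with respect to the second block of variables. -/
noncomputable def grady {dx dy : ℕ}
    (f : EuclideanSpace ℝ (Fin dx) → EuclideanSpace ℝ (Fin dy) → ℝ)
    (x : EuclideanSpace ℝ (Fin dx)) (y : EuclideanSpace ℝ (Fin dy)) : EuclideanSpace ℝ (Fin dy) :=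
  gradient (fun y' => f x y') y

lemma sqrt_sum_sq_aux (L₀ L₁ a b g1 g2 s d : ℝ) (hL₀ : 0 < L₀) (hL₁ : 0 < L₁)
    (ha0 : 0 ≤ a) (hb0 : 0 ≤ b) (hg10 : 0 ≤ g1) (hg20 : 0 ≤ g2) (hd0 : 0 ≤ d) (hs0 : 0 ≤ s)
    (hs2 : s ^ 2 = g1 ^ 2 + g2 ^ 2)
    (ha : a ≤ (L₀ / 2 + L₁ / 2 * g1) * d) (hb : b ≤ (L₀ / 2 + L₁ / 2 * g2) * d) :
    Real.sqrt (a ^ 2 + b ^ 2) ≤ (L₀ + L₁ * s) * d := by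
  have hs1 : g1 ≤ s := by nlinarith [sq_nonneg (s - g1), sq_nonneg g2]
  have hs1' : g2 ≤ s := by nlinarith [sq_nonneg (s - g2), sq_nonneg g1]
  have key : a ^ 2 + b ^ 2 ≤ ((L₀ + L₁ * s) * d) ^ 2 := by
    have ha2 : a ^ 2 ≤ ((L₀ / 2 + L₁ / 2 * g1) * d) ^ 2 := pow_le_pow_left₀ ha0 ha 2
    have hb2 : b ^ 2 ≤ ((L₀ / 2 + L₁ / 2 * g2) * d) ^ 2 := pow_le_pow_left₀ hb0 hb 2
    have hpq : (L₀ / 2 + L₁ / 2 * g1) ^ 2 + (L₀ / 2 + L₁ / 2 * g2) ^ 2 ≤ (L₀ + L₁ * s) ^ 2 := by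
      nlinarith [mul_nonneg (mul_nonneg hL₀.le hL₁.le) (sub_nonneg.2 hs1),
        mul_nonneg (mul_nonneg hL₀.le hL₁.le) (sub_nonneg.2 hs1'),
        sq_nonneg L₀, mul_nonneg (mul_nonneg hL₁.le hL₁.le)
          (mul_nonneg (sub_nonneg.2 hs1) (sub_nonneg.2 hs1'))]
    have h3 := mul_le_mul_of_nonneg_right hpq (sq_nonneg d)
    have e1 : ((L₀ / 2 + L₁ / 2 * g1) * d) ^ 2 + ((L₀ / 2 + L₁ / 2 * g2) * d) ^ 2 =
        ((L₀ / 2 + L₁ / 2 * g1) ^ 2 + (L₀ / 2 + L₁ / 2 * g2) ^ 2) * d ^ 2 := by ring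
    have e2 : ((L₀ + L₁ * s) * d) ^ 2 = (L₀ + L₁ * s) ^ 2 * d ^ 2 := by ring
    linarith
  calc Real.sqrt (a ^ 2 + b ^ 2) ≤ Real.sqrt (((L₀ + L₁ * s) * d) ^ 2) :=
        Real.sqrt_le_sqrt key
    _ = (L₀ + L₁ * s) * d := Real.sqrt_sq (by positivity)

theorem relaxed_smoothness_of_blockwise_relaxed_smoothness
    {dx dy : ℕ} (L₀ L₁ : ℝ) (hL₀ : 0 < L₀) (hL₁ : 0 < L₁)
    (f : EuclideanSpace ℝ (Fin dx) → EuclideanSpace ℝ (Fin dy) → ℝ)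
    (hf : Differentiable ℝ (fun p : EuclideanSpace ℝ (Fin dx) × EuclideanSpace ℝ (Fin dy) =>
      f p.1 p.2))
    (hx : ∀ x y x' y',
      Real.sqrt (‖x - x'‖ ^ 2 + ‖y - y'‖ ^ 2) ≤ 1 / L₁ →
      ‖gradx f x y - gradx f x' y'‖ ≤
        (L₀ / 2 + L₁ / 2 * ‖gradx f x y‖) * Real.sqrt (‖x - x'‖ ^ 2 + ‖y - y'‖ ^ 2))
    (hy : ∀ x y x' y',
      Real.sqrt (‖x - x'‖ ^ 2 + ‖y - y'‖ ^ 2) ≤ 1 / L₁ →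
      ‖grady f x y - grady f x' y'‖ ≤
        (L₀ / 2 + L₁ / 2 * ‖grady f x y‖) * Real.sqrt (‖x - x'‖ ^ 2 + ‖y - y'‖ ^ 2)) :
    ∀ x y x' y',
      Real.sqrt (‖x - x'‖ ^ 2 + ‖y - y'‖ ^ 2) ≤ 1 / L₁ →
      Real.sqrt (‖gradx f x y - gradx f x' y'‖ ^ 2 + ‖grady f x y - grady f x' y'‖ ^ 2) ≤
        (L₀ + L₁ * Real.sqrt (‖gradx f x y‖ ^ 2 + ‖grady f x y‖ ^ 2)) *
          Real.sqrt (‖x - x'‖ ^ 2 + ‖y - y'‖ ^ 2) := by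
  intro x y x' y' hd
  exact sqrt_sum_sq_aux L₀ L₁ _ _ _ _ _ _ hL₀ hL₁ (norm_nonneg _) (norm_nonneg _)
    (norm_nonneg _) (norm_nonneg _) (Real.sqrt_nonneg _) (Real.sqrt_nonneg _)
    (Real.sq_sqrt (by positivity)) (hx x y x' y' hd) (hy x y x' y' hd)
end

section
/- Under the bilevel setup, the total objective Φ(x) = f(x, y*(x)) is differentiable and its gradient (the hypergradient) satisfies ∇Φ(x) = ∇_x f(x, y*(x)) − ∇_x∇_y g(x, y*(x)) [∇_y² g(x, y*(x))]⁻¹ ∇_y f(x, y*(x)) = ∇_x f(x, y*(x)) − ∇_x∇_y g(x, y*(x)) z*(x) for every x ∈ ℝ^{d_x}. -/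
open Set
open scoped RealInnerProductSpace

/-- Hessian `∇_y² g(x, y)` of `g` with respect to the second block, as a continuous
linear map `ℝ^{d_y} → ℝ^{d_y}`. -/
noncomputable def hessyy {dx dy : ℕ}
    (g : EuclideanSpace ℝ (Fin dx) → EuclideanSpace ℝ (Fin dy) → ℝ)
    (x : EuclideanSpace ℝ (Fin dx)) (y : EuclideanSpace ℝ (Fin dy)) :
    EuclideanSpace ℝ (Fin dy) →L[ℝ] EuclideanSpace ℝ (Fin dy) :=
  fderiv ℝ (fun y' => grady g x y') y

/-- Mixed second derivative `∇_x∇_y g(x, y)`, viewed (as in the paper) as a linear map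
from `ℝ^{d_y}` to `ℝ^{d_x}`; it is the adjoint of the derivative in `x` of `∇_y g(·, y)`. -/
noncomputable def gradxy {dx dy : ℕ}
    (g : EuclideanSpace ℝ (Fin dx) → EuclideanSpace ℝ (Fin dy) → ℝ)
    (x : EuclideanSpace ℝ (Fin dx)) (y : EuclideanSpace ℝ (Fin dy)) :
    EuclideanSpace ℝ (Fin dy) →L[ℝ] EuclideanSpace ℝ (Fin dx) :=
  ContinuousLinearMap.adjoint (fderiv ℝ (fun x' => grady g x' y) x)

/-!
STATEMENT 1: Under the bilevel setup, the total objective `Φ(x) = f(x, y*(x))` is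
differentiable and its gradient (the hypergradient) satisfies
`∇Φ(x) = ∇_x f(x, y*(x)) − ∇_x∇_y g(x, y*(x)) [∇_y² g(x, y*(x))]⁻¹ ∇_y f(x, y*(x))
       = ∇_x f(x, y*(x)) − ∇_x∇_y g(x, y*(x)) z*(x)`.
-/


lemma inner_gradient {F : Type*} [NormedAddCommGroup F] [InnerProductSpace ℝ F] [CompleteSpace F]
    (f : F → ℝ) (z v : F) : ⟪gradient f z, v⟫ = fderiv ℝ f z v :=
  InnerProductSpace.toDual_symm_apply

theorem hypergradient_formula
    {dx dy : ℕ} (μ : ℝ) (hμ : 0 < μ)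
    (f g : EuclideanSpace ℝ (Fin dx) → EuclideanSpace ℝ (Fin dy) → ℝ)
    (ystar : EuclideanSpace ℝ (Fin dx) → EuclideanSpace ℝ (Fin dy))
    -- f is continuously differentiable, g is twice continuously differentiable:
    (hf : ContDiff ℝ 1 (fun p : EuclideanSpace ℝ (Fin dx) × EuclideanSpace ℝ (Fin dy) =>
      f p.1 p.2))
    (hg : ContDiff ℝ 2 (fun p : EuclideanSpace ℝ (Fin dx) × EuclideanSpace ℝ (Fin dy) =>
      g p.1 p.2))
    -- g(x, ·) is μ-strongly convex and y*(x) is its (unique) minimizer: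
    (hsc : ∀ x, StrongConvexOn univ μ (g x))
    (hmin : ∀ x y, g x (ystar x) ≤ g x y)
    (hcrit : ∀ x, grady g x (ystar x) = 0)
    -- the Hessian at the minimizer satisfies `∇_y² g(x, y*(x)) ⪰ μI`:
    (hHess : ∀ x v, μ * ‖v‖ ^ 2 ≤ ⟪hessyy g x (ystar x) v, v⟫)
    -- the lower-level solution map is differentiable:
    (hystar : Differentiable ℝ ystar) :
    Differentiable ℝ (fun x => f x (ystar x)) ∧
      ∀ x, gradient (fun x' => f x' (ystar x')) x =
        gradx f x (ystar x) -
          gradxy g x (ystar x)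
            ((hessyy g x (ystar x)).inverse (grady f x (ystar x))) := by
  classical
  have hfd : Differentiable ℝ (fun p : EuclideanSpace ℝ (Fin dx) × EuclideanSpace ℝ (Fin dy) =>
      f p.1 p.2) := hf.differentiable one_ne_zero
  have hgd : Differentiable ℝ (fun p : EuclideanSpace ℝ (Fin dx) × EuclideanSpace ℝ (Fin dy) =>
      g p.1 p.2) := hg.differentiable two_ne_zero
  have hpair : ∀ x : EuclideanSpace ℝ (Fin dx), HasFDerivAt (fun x' => (x', ystar x'))
      ((ContinuousLinearMap.id ℝ (EuclideanSpace ℝ (Fin dx))).prod (fderiv ℝ ystar x)) x :=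
    fun x => (hasFDerivAt_id x).prodMk (hystar x).hasFDerivAt
  have hΦ : Differentiable ℝ (fun x => f x (ystar x)) := fun x =>
    ((hfd (x, ystar x)).hasFDerivAt.comp x (hpair x) :).differentiableAt
  refine ⟨hΦ, fun x => ?_⟩
  set y : EuclideanSpace ℝ (Fin dy) := ystar x with hy
  -- Γ : the full gradient-in-y map
  have hΓeq : ∀ p : EuclideanSpace ℝ (Fin dx) × EuclideanSpace ℝ (Fin dy),
      grady g p.1 p.2 =
      (InnerProductSpace.toDual ℝ (EuclideanSpace ℝ (Fin dy))).symm
        ((fderiv ℝ (fun p : EuclideanSpace ℝ (Fin dx) × EuclideanSpace ℝ (Fin dy) =>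
            g p.1 p.2) p).comp
          (ContinuousLinearMap.inr ℝ (EuclideanSpace ℝ (Fin dx)) (EuclideanSpace ℝ (Fin dy)))) := by
    intro p
    have h1 : HasFDerivAt (fun y' => g p.1 y')
        ((fderiv ℝ (fun p : EuclideanSpace ℝ (Fin dx) × EuclideanSpace ℝ (Fin dy) =>
            g p.1 p.2) p).comp
          (ContinuousLinearMap.inr ℝ (EuclideanSpace ℝ (Fin dx)) (EuclideanSpace ℝ (Fin dy)))) p.2 :=
      ((hgd p).hasFDerivAt.comp p.2 (hasFDerivAt_prodMk_right (𝕜 := ℝ) p.1 p.2) :)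
    simp only [grady, gradient]
    rw [h1.fderiv]
  have hfderivG2 : ContDiff ℝ 1 (fderiv ℝ
      (fun p : EuclideanSpace ℝ (Fin dx) × EuclideanSpace ℝ (Fin dy) => g p.1 p.2)) :=
    hg.fderiv_right (by norm_num)
  have hΓc : ContDiff ℝ 1 (fun p : EuclideanSpace ℝ (Fin dx) × EuclideanSpace ℝ (Fin dy) =>
      grady g p.1 p.2) := by
    rw [funext hΓeq]
    apply ContDiff.comp
    · exact ((InnerProductSpace.toDual ℝ
        (EuclideanSpace ℝ (Fin dy))).symm.toContinuousLinearEquiv).contDiff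
    · exact hfderivG2.clm_comp contDiff_const
  have hΓd : Differentiable ℝ (fun p : EuclideanSpace ℝ (Fin dx) × EuclideanSpace ℝ (Fin dy) =>
      grady g p.1 p.2) := hΓc.differentiable one_ne_zero
  set Γ' := fderiv ℝ (fun p : EuclideanSpace ℝ (Fin dx) × EuclideanSpace ℝ (Fin dy) =>
      grady g p.1 p.2) (x, y) with hΓ'def
  set D := fderiv ℝ ystar x with hDdef
  -- partial derivatives of Γ
  have hA : HasFDerivAt (fun x' => grady g x' y)
      (Γ'.comp (ContinuousLinearMap.inl ℝ (EuclideanSpace ℝ (Fin dx)) (EuclideanSpace ℝ (Fin dy)))) x :=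
    ((hΓd (x, y)).hasFDerivAt.comp x (hasFDerivAt_prodMk_left (𝕜 := ℝ) x y) :)
  have hAdef : fderiv ℝ (fun x' => grady g x' y) x =
      Γ'.comp (ContinuousLinearMap.inl ℝ (EuclideanSpace ℝ (Fin dx)) (EuclideanSpace ℝ (Fin dy))) :=
    hA.fderiv
  have hHdef : hessyy g x y =
      Γ'.comp (ContinuousLinearMap.inr ℝ (EuclideanSpace ℝ (Fin dx)) (EuclideanSpace ℝ (Fin dy))) := by
    have := ((hΓd (x, y)).hasFDerivAt.comp y (hasFDerivAt_prodMk_right (𝕜 := ℝ) x y)).fderiv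
    simpa [hessyy, Function.comp_def] using this
  -- implicit differentiation
  have hzero : (fun x' => grady g x' (ystar x')) =
      (fun _ => (0 : EuclideanSpace ℝ (Fin dy))) := funext hcrit
  have hchain : HasFDerivAt (fun x' => grady g x' (ystar x'))
      (Γ'.comp ((ContinuousLinearMap.id ℝ (EuclideanSpace ℝ (Fin dx))).prod D)) x :=
    ((hΓd (x, y)).hasFDerivAt.comp x (hpair x) :)
  have h0 : Γ'.comp ((ContinuousLinearMap.id ℝ (EuclideanSpace ℝ (Fin dx))).prod D) = 0 := by
    rw [hzero] at hchain
    exact hchain.unique (hasFDerivAt_const 0 x)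
  have hAH : ∀ u, hessyy g x y (D u) = -(fderiv ℝ (fun x' => grady g x' y) x u) := by
    intro u
    have h1 : Γ' (u, D u) = 0 := by
      have := congrArg (fun (L : _ →L[ℝ] _) => L u) h0
      simpa using this
    have h2 : (u, D u) = ((u, 0) : _ × _) + (0, D u) := by simp
    rw [h2, map_add] at h1
    rw [hHdef, hAdef]
    simp only [ContinuousLinearMap.comp_apply, ContinuousLinearMap.inl_apply,
      ContinuousLinearMap.inr_apply]
    exact eq_neg_of_add_eq_zero_right h1
  -- Hessian is self-adjoint
  have hφ : ContDiff ℝ 2 (fun y' => g x y') :=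
    hg.comp (contDiff_const.prodMk contDiff_id)
  have hφ1 : ContDiff ℝ 1 (fderiv ℝ (fun y' => g x y')) := hφ.fderiv_right (by norm_num)
  have hHB : ∀ v, hessyy g x y v =
      (InnerProductSpace.toDual ℝ (EuclideanSpace ℝ (Fin dy))).symm
        (fderiv ℝ (fderiv ℝ (fun y' => g x y')) y v) := by
    intro v
    have hcompeq : (fun y' => grady g x y') =
        (InnerProductSpace.toDual ℝ (EuclideanSpace ℝ (Fin dy))).symm ∘
          (fderiv ℝ (fun y' => g x y')) := rfl
    have := (InnerProductSpace.toDual ℝ (EuclideanSpace ℝ (Fin dy))).symm.comp_fderiv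
      (f := fderiv ℝ (fun y' => g x y')) (x := y)
    simp only [hessyy, hcompeq, this]
    rfl
  have hsym : ∀ v w, ⟪hessyy g x y v, w⟫ = ⟪v, hessyy g x y w⟫ := by
    intro v w
    have hs : fderiv ℝ (fderiv ℝ (fun y' => g x y')) y v w =
        fderiv ℝ (fderiv ℝ (fun y' => g x y')) y w v :=
      (hφ.contDiffAt.isSymmSndFDerivAt (by simp [minSmoothness_of_isRCLikeNormedField])) v w
    rw [hHB v, hHB w, InnerProductSpace.toDual_symm_apply, real_inner_comm,
      InnerProductSpace.toDual_symm_apply, hs]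
  -- Hessian is invertible
  have hinj : Function.Injective (hessyy g x y) := by
    intro a b hab
    have hz : hessyy g x y (a - b) = 0 := by rw [map_sub, hab, sub_self]
    by_contra hne
    have hab0 : a - b ≠ 0 := sub_ne_zero.mpr hne
    have h1 := hHess x (a - b)
    rw [← hy, hz, inner_zero_left] at h1
    have hn : 0 < ‖a - b‖ := norm_pos_iff.mpr hab0
    have : 0 < μ * ‖a - b‖ ^ 2 := by positivity
    linarith
  set He := (LinearEquiv.ofBijective (hessyy g x y).toLinearMap
    ⟨hinj, LinearMap.injective_iff_surjective.mp hinj⟩).toContinuousLinearEquiv with hHedef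
  have hHe : (He : EuclideanSpace ℝ (Fin dy) →L[ℝ] EuclideanSpace ℝ (Fin dy)) = hessyy g x y := by
    ext v
    rfl
  have hHeapp : ∀ v, He v = hessyy g x y v := fun v => by rw [← hHe]; rfl
  have hinvH : (hessyy g x y).inverse = (He.symm :
      EuclideanSpace ℝ (Fin dy) →L[ℝ] EuclideanSpace ℝ (Fin dy)) := by
    rw [← hHe]
    exact ContinuousLinearMap.inverse_equiv He
  -- the inverse of the Hessian is also self-adjoint
  have hsyminv : ∀ w z : EuclideanSpace ℝ (Fin dy), ⟪He.symm w, z⟫ = ⟪w, He.symm z⟫ := by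
    intro w z
    have h1 : hessyy g x y (He.symm z) = z := by rw [← hHeapp]; exact He.apply_symm_apply z
    have h2 : hessyy g x y (He.symm w) = w := by rw [← hHeapp]; exact He.apply_symm_apply w
    calc ⟪He.symm w, z⟫ = ⟪He.symm w, hessyy g x y (He.symm z)⟫ := by rw [h1]
      _ = ⟪hessyy g x y (He.symm w), He.symm z⟫ := (hsym _ _).symm
      _ = ⟪w, He.symm z⟫ := by rw [h2]
  -- formula for D u
  have hDu : ∀ u, D u = -(He.symm (fderiv ℝ (fun x' => grady g x' y) x u)) := by
    intro u
    have h1 := hAH u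
    have h2 : He.symm (hessyy g x y (D u)) = D u := by
      rw [← hHeapp]; exact He.symm_apply_apply (D u)
    rw [h1, map_neg] at h2
    exact h2.symm
  -- final computation
  refine ext_inner_right ℝ (fun u => ?_)
  have hfderivΦ : fderiv ℝ (fun x' => f x' (ystar x')) x =
      (fderiv ℝ (fun p : EuclideanSpace ℝ (Fin dx) × EuclideanSpace ℝ (Fin dy) =>
        f p.1 p.2) (x, y)).comp
        ((ContinuousLinearMap.id ℝ (EuclideanSpace ℝ (Fin dx))).prod D) :=
    ((hfd (x, y)).hasFDerivAt.comp x (hpair x) :).fderiv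
  have hFx : fderiv ℝ (fun x' => f x' y) x =
      (fderiv ℝ (fun p : EuclideanSpace ℝ (Fin dx) × EuclideanSpace ℝ (Fin dy) =>
        f p.1 p.2) (x, y)).comp
        (ContinuousLinearMap.inl ℝ (EuclideanSpace ℝ (Fin dx)) (EuclideanSpace ℝ (Fin dy))) :=
    ((hfd (x, y)).hasFDerivAt.comp x (hasFDerivAt_prodMk_left (𝕜 := ℝ) x y) :).fderiv
  have hFy : fderiv ℝ (fun y' => f x y') y =
      (fderiv ℝ (fun p : EuclideanSpace ℝ (Fin dx) × EuclideanSpace ℝ (Fin dy) =>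
        f p.1 p.2) (x, y)).comp
        (ContinuousLinearMap.inr ℝ (EuclideanSpace ℝ (Fin dx)) (EuclideanSpace ℝ (Fin dy))) :=
    ((hfd (x, y)).hasFDerivAt.comp y (hasFDerivAt_prodMk_right (𝕜 := ℝ) x y) :).fderiv
  calc ⟪gradient (fun x' => f x' (ystar x')) x, u⟫
      = fderiv ℝ (fun x' => f x' (ystar x')) x u := inner_gradient _ _ _
    _ = fderiv ℝ (fun p : EuclideanSpace ℝ (Fin dx) × EuclideanSpace ℝ (Fin dy) =>
          f p.1 p.2) (x, y) (u, D u) := by rw [hfderivΦ]; rfl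
    _ = fderiv ℝ (fun p : EuclideanSpace ℝ (Fin dx) × EuclideanSpace ℝ (Fin dy) =>
          f p.1 p.2) (x, y) (u, 0) +
        fderiv ℝ (fun p : EuclideanSpace ℝ (Fin dx) × EuclideanSpace ℝ (Fin dy) =>
          f p.1 p.2) (x, y) (0, D u) := by rw [← map_add]; congr 1; simp
    _ = fderiv ℝ (fun x' => f x' y) x u + fderiv ℝ (fun y' => f x y') y (D u) := by
        rw [hFx, hFy]; rfl
    _ = ⟪gradx f x y, u⟫ + ⟪grady f x y, D u⟫ := by
        rw [gradx, grady, inner_gradient, inner_gradient]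
    _ = ⟪gradx f x y, u⟫ - ⟪grady f x y, He.symm (fderiv ℝ (fun x' => grady g x' y) x u)⟫ := by
        rw [hDu u, inner_neg_right]; ring
    _ = ⟪gradx f x y, u⟫ -
        ⟪He.symm (grady f x y), fderiv ℝ (fun x' => grady g x' y) x u⟫ := by
        rw [hsyminv]
    _ = ⟪gradx f x y, u⟫ -
        ⟪gradxy g x y ((hessyy g x y).inverse (grady f x y)), u⟫ := by
        rw [gradxy, ContinuousLinearMap.adjoint_inner_left, hinvH]; rfl
    _ = ⟪gradx f x y - gradxy g x y ((hessyy g x y).inverse (grady f x y)), u⟫ := by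
        rw [inner_sub_left]
end

section
/- Under the bilevel setup, if additionally ‖∇_x∇_y g(u)‖ ≤ C_gxy (operator norm) for all u ∈ ℝ^{d_x} × ℝ^{d_y}, then the lower-level solution map y* is (C_gxy/μ)-Lipschitz: ‖y*(x) − y*(x')‖ ≤ (C_gxy/μ)·‖x − x'‖ for all x, x' ∈ ℝ^{d_x}. -/
open Set
open scoped RealInnerProductSpace

/-!
STATEMENT 2: Under the bilevel setup, if `‖∇_x∇_y g(u)‖ ≤ C_gxy` (operator norm) for
all `u`, then the lower-level solution map `y*` is `(C_gxy/μ)`-Lipschitz: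
`‖y*(x) − y*(x')‖ ≤ (C_gxy/μ)·‖x − x'‖` for all `x, x'`.
-/

theorem ystar_lip_core {Ex Ey : Type*} [NormedAddCommGroup Ex] [InnerProductSpace ℝ Ex]
    [CompleteSpace Ex] [NormedAddCommGroup Ey] [InnerProductSpace ℝ Ey] [CompleteSpace Ey]
    (μ C : ℝ) (hμ : 0 < μ) (hC : 0 ≤ C)
    (g : Ex → Ey → ℝ)
    (ystar : Ex → Ey)
    (hg : ContDiff ℝ 2 (fun p : Ex × Ey => g p.1 p.2))
    (hcrit : ∀ x, gradient (fun y' => g x y') (ystar x) = 0)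
    (hHess : ∀ x v, μ * ‖v‖ ^ 2 ≤
      ⟪fderiv ℝ (fun y' => gradient (fun y'' => g x y'') y') (ystar x) v, v⟫)
    (hystar : Differentiable ℝ ystar)
    (hbound : ∀ x, ‖fderiv ℝ (fun x' => gradient (fun y' => g x' y') (ystar x)) x‖ ≤ C) :
    ∀ x x', ‖ystar x - ystar x'‖ ≤ C / μ * ‖x - x'‖ := by
  set gp : Ex × Ey → ℝ := fun p => g p.1 p.2 with hgp
  have hgd : Differentiable ℝ gp := hg.differentiable (by norm_num)
  set Φ : Ex × Ey → (Ey →L[ℝ] ℝ) :=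
    fun p => (fderiv ℝ gp p).comp (ContinuousLinearMap.inr ℝ Ex Ey) with hΦdef
  have hΦ : ContDiff ℝ 1 Φ := (hg.fderiv_right (le_refl 2)).clm_comp contDiff_const
  have hpart : ∀ (x : Ex) (y : Ey), HasFDerivAt (fun y' => gp (x, y')) (Φ (x, y)) y := by
    intro x y
    exact (hgd (x, y)).hasFDerivAt.comp y (hasFDerivAt_prodMk_right x y)
  set G : Ex × Ey → Ey := fun p => (InnerProductSpace.toDual ℝ Ey).symm (Φ p) with hGdef
  have hgrady : ∀ (x : Ex) (y : Ey), gradient (fun y' => g x y') y = G (x, y) := by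
    intro x y
    rw [gradient, (hpart x y).fderiv]
  have hGd : Differentiable ℝ G := fun p =>
    ((InnerProductSpace.toDual ℝ Ey).symm.differentiable.differentiableAt).comp p
      ((hΦ.differentiable one_ne_zero) p)
  have key : ∀ x, ‖fderiv ℝ ystar x‖ ≤ C / μ := by
    intro x
    set DG := fderiv ℝ G (x, ystar x) with hDG
    set Dy := fderiv ℝ ystar x with hDy
    have hchain : HasFDerivAt (fun x' => G (x', ystar x'))
        (DG.comp ((ContinuousLinearMap.id ℝ Ex).prod Dy)) x :=
      (hGd _).hasFDerivAt.comp x (HasFDerivAt.prodMk (hasFDerivAt_id x) (hystar x).hasFDerivAt)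
    have hzero : (fun x' => G (x', ystar x')) = fun _ => (0 : Ey) := by
      funext x'
      rw [← hgrady, hcrit]
    have hDzero : DG.comp ((ContinuousLinearMap.id ℝ Ex).prod Dy) = 0 := by
      rw [hzero] at hchain
      exact hchain.unique (hasFDerivAt_const 0 x)
    have hH : fderiv ℝ (fun y' => gradient (fun y'' => g x y'') y') (ystar x)
        = DG.comp (ContinuousLinearMap.inr ℝ Ex Ey) := by
      have he : (fun y' => gradient (fun y'' => g x y'') y') = fun y' => G (x, y') := by
        funext y'; exact hgrady x y'
      rw [he]
      exact ((hGd _).hasFDerivAt.comp (ystar x) (hasFDerivAt_prodMk_right x (ystar x))).fderiv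
    have hA : fderiv ℝ (fun x' => gradient (fun y' => g x' y') (ystar x)) x
        = DG.comp (ContinuousLinearMap.inl ℝ Ex Ey) := by
      have he : (fun x' => gradient (fun y' => g x' y') (ystar x)) = fun x' => G (x', ystar x) := by
        funext x'; exact hgrady x' (ystar x)
      rw [he]
      exact ((hGd _).hasFDerivAt.comp x (hasFDerivAt_prodMk_left x (ystar x))).fderiv
    have hvec : ∀ v : Ex, ‖Dy v‖ ≤ C / μ * ‖v‖ := by
      intro v
      have h0 : DG (v, Dy v) = 0 := by
        have h := congrFun (congrArg DFunLike.coe hDzero) v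
        simpa using h
      have hHDy : DG (0, Dy v) = - DG (v, 0) := by
        have hsplit : DG (v, Dy v) = DG (v, 0) + DG (0, Dy v) := by
          rw [← map_add]; norm_num
        rw [h0] at hsplit
        exact eq_neg_of_add_eq_zero_right hsplit.symm
      have hineq := hHess x (Dy v)
      rw [hH] at hineq
      have hcoe : (DG.comp (ContinuousLinearMap.inr ℝ Ex Ey)) (Dy v) = DG (0, Dy v) := rfl
      rw [hcoe, hHDy] at hineq
      have hAv : ‖DG (v, 0)‖ ≤ C * ‖v‖ := by
        have h1 : ‖(DG.comp (ContinuousLinearMap.inl ℝ Ex Ey)) v‖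
            ≤ ‖DG.comp (ContinuousLinearMap.inl ℝ Ex Ey)‖ * ‖v‖ :=
          ContinuousLinearMap.le_opNorm _ v
        have h2 : ‖DG.comp (ContinuousLinearMap.inl ℝ Ex Ey)‖ ≤ C := hA ▸ hbound x
        calc ‖DG (v, 0)‖ = ‖(DG.comp (ContinuousLinearMap.inl ℝ Ex Ey)) v‖ := rfl
          _ ≤ ‖DG.comp (ContinuousLinearMap.inl ℝ Ex Ey)‖ * ‖v‖ := h1
          _ ≤ C * ‖v‖ := by
              exact mul_le_mul_of_nonneg_right h2 (norm_nonneg v)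
      have hinner : ⟪-DG (v, 0), Dy v⟫ ≤ C * ‖v‖ * ‖Dy v‖ := by
        calc ⟪-DG (v, 0), Dy v⟫ ≤ ‖-DG (v, 0)‖ * ‖Dy v‖ := real_inner_le_norm _ _
          _ = ‖DG (v, 0)‖ * ‖Dy v‖ := by rw [norm_neg]
          _ ≤ C * ‖v‖ * ‖Dy v‖ :=
              mul_le_mul_of_nonneg_right hAv (norm_nonneg _)
      have hmain : μ * ‖Dy v‖ ^ 2 ≤ C * ‖v‖ * ‖Dy v‖ := le_trans hineq hinner
      rcases eq_or_lt_of_le (norm_nonneg (Dy v)) with hz | hz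
      · rw [← hz]
        positivity
      · rw [div_mul_eq_mul_div, le_div_iff₀ hμ]
        have hmain' : (μ * ‖Dy v‖) * ‖Dy v‖ ≤ (C * ‖v‖) * ‖Dy v‖ := by
          calc (μ * ‖Dy v‖) * ‖Dy v‖ = μ * ‖Dy v‖ ^ 2 := by ring
            _ ≤ C * ‖v‖ * ‖Dy v‖ := hmain
        have h3 := le_of_mul_le_mul_right hmain' hz
        linarith
    refine ContinuousLinearMap.opNorm_le_bound _ (div_nonneg hC hμ.le) hvec
  intro x x'
  exact convex_univ.norm_image_sub_le_of_norm_fderiv_le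
    (fun z _ => hystar z) (fun z _ => key z) (mem_univ x') (mem_univ x)



theorem ystar_lipschitz
    {dx dy : ℕ} (μ Cgxy : ℝ) (hμ : 0 < μ) (hCgxy : 0 < Cgxy)
    (g : EuclideanSpace ℝ (Fin dx) → EuclideanSpace ℝ (Fin dy) → ℝ)
    (ystar : EuclideanSpace ℝ (Fin dx) → EuclideanSpace ℝ (Fin dy))
    -- g is twice continuously differentiable:
    (hg : ContDiff ℝ 2 (fun p : EuclideanSpace ℝ (Fin dx) × EuclideanSpace ℝ (Fin dy) =>
      g p.1 p.2))
    -- g(x, ·) is μ-strongly convex and y*(x) is its (unique) minimizer: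
    (hsc : ∀ x, StrongConvexOn univ μ (g x))
    (hmin : ∀ x y, g x (ystar x) ≤ g x y)
    (hcrit : ∀ x, grady g x (ystar x) = 0)
    -- the Hessian at the minimizer satisfies `∇_y² g(x, y*(x)) ⪰ μI`:
    (hHess : ∀ x v, μ * ‖v‖ ^ 2 ≤ ⟪hessyy g x (ystar x) v, v⟫)
    -- the lower-level solution map is differentiable:
    (hystar : Differentiable ℝ ystar)
    -- the mixed second derivative is bounded in operator norm:
    (hbound : ∀ x y, ‖gradxy g x y‖ ≤ Cgxy) :
    ∀ x x', ‖ystar x - ystar x'‖ ≤ Cgxy / μ * ‖x - x'‖ := by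
  refine ystar_lip_core μ Cgxy hμ hCgxy.le g ystar hg (fun x => hcrit x) (fun x v => hHess x v)
    hystar ?_
  intro x
  have h := hbound x (ystar x)
  rw [gradxy] at h
  show ‖fderiv ℝ (fun x' => grady g x' (ystar x)) x‖ ≤ Cgxy
  rw [← LinearIsometryEquiv.norm_map (ContinuousLinearMap.adjoint (𝕜 := ℝ))
    (fderiv ℝ (fun x' => grady g x' (ystar x)) x)]
  exact h
end

section
/- Under the bilevel setup and the stated regularity assumptions, the linear-system solution z*(x) = [∇_y² g(x, y*(x))]⁻¹ ∇_y f(x, y*(x)) is locally Lipschitz: for all x, x' with ‖x − x'‖ ≤ 1/√(2(1 + C_gxy²/μ²)(L_{x,1}² + L_{y,1}²)), ‖z*(x) − z*(x')‖ ≤ L_{z*}·‖x − x'‖, where L_{z*} = √(1 + (C_gxy/μ)²)·(ρM/μ² + (L_{y,0} + L_{y,1}M)/μ). -/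
open Set
open scoped RealInnerProductSpace

/-!
STATEMENT 3: Under the bilevel setup and stated regularity assumptions, the linear-system
solution `z*(x) = [∇_y² g(x, y*(x))]⁻¹ ∇_y f(x, y*(x))` is locally Lipschitz: for all
`x, x'` with `‖x − x'‖ ≤ 1/√(2(1 + C_gxy²/μ²)(L_{x,1}² + L_{y,1}²))`,
`‖z*(x) − z*(x')‖ ≤ L_{z*}‖x − x'‖` with
`L_{z*} = √(1 + (C_gxy/μ)²)(ρM/μ² + (L_{y,0} + L_{y,1}M)/μ)`.
-/

lemma hess_inv_props {n : ℕ} (μ : ℝ) (hμ : 0 < μ)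
    (H : EuclideanSpace ℝ (Fin n) →L[ℝ] EuclideanSpace ℝ (Fin n))
    (h : ∀ v, μ * ‖v‖ ^ 2 ≤ ⟪H v, v⟫) :
    (∀ w, H (H.inverse w) = w) ∧ (∀ v, H.inverse (H v) = v) ∧ ‖H.inverse‖ ≤ 1 / μ := by
  have hinj : Function.Injective H := by
    intro v w hvw
    have hz : H (v - w) = 0 := by simp [map_sub, hvw]
    have h1 := h (v - w)
    rw [hz] at h1
    simp only [inner_zero_left] at h1
    have h2 : ‖v - w‖ ^ 2 ≤ 0 := by
      by_contra hcon
      push_neg at hcon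
      nlinarith [mul_pos hμ hcon]
    have h3 : ‖v - w‖ = 0 := by nlinarith [sq_nonneg ‖v - w‖, norm_nonneg (v - w)]
    exact sub_eq_zero.mp (norm_eq_zero.mp h3)
  have hinjL : Function.Injective (H : EuclideanSpace ℝ (Fin n) →ₗ[ℝ] EuclideanSpace ℝ (Fin n)) := hinj
  have hsurj := LinearMap.injective_iff_surjective.mp hinjL
  let e₀ : EuclideanSpace ℝ (Fin n) ≃ₗ[ℝ] EuclideanSpace ℝ (Fin n) :=
    LinearEquiv.ofBijective (H : EuclideanSpace ℝ (Fin n) →ₗ[ℝ] EuclideanSpace ℝ (Fin n)) ⟨hinjL, hsurj⟩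
  let e : EuclideanSpace ℝ (Fin n) ≃L[ℝ] EuclideanSpace ℝ (Fin n) := e₀.toContinuousLinearEquiv
  have hcoe : (e : EuclideanSpace ℝ (Fin n) →L[ℝ] EuclideanSpace ℝ (Fin n)) = H := by
    ext v; rfl
  have hinv : H.inverse = (e.symm : EuclideanSpace ℝ (Fin n) →L[ℝ] EuclideanSpace ℝ (Fin n)) := by
    rw [← hcoe, ContinuousLinearMap.inverse_equiv]
  have hright : ∀ w, H (H.inverse w) = w := by
    intro w; rw [hinv, ← hcoe]; exact e.apply_symm_apply w
  have hleft : ∀ v, H.inverse (H v) = v := by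
    intro v; rw [hinv, ← hcoe]; exact e.symm_apply_apply v
  refine ⟨hright, hleft, ?_⟩
  apply ContinuousLinearMap.opNorm_le_bound _ (by positivity)
  intro w
  set v := H.inverse w with hv
  have hHvw : H v = w := hright w
  have h1 := h v
  rw [hHvw] at h1
  have h2 : ⟪w, v⟫ ≤ ‖w‖ * ‖v‖ := real_inner_le_norm w v
  rcases eq_or_lt_of_le (norm_nonneg v) with h0 | h0
  · rw [← h0]; positivity
  · have hmv : μ * ‖v‖ ≤ ‖w‖ := by nlinarith
    rw [one_div, inv_mul_eq_div, le_div_iff₀ hμ]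
    linarith

theorem zstar_locally_lipschitz
    {dx dy : ℕ} (μ Cgxy M ρ Lx0 Lx1 Ly0 Ly1 : ℝ)
    (hμ : 0 < μ) (hCgxy : 0 < Cgxy) (hM : 0 < M) (hρ : 0 < ρ)
    (hLx0 : 0 < Lx0) (hLx1 : 0 < Lx1) (hLy0 : 0 < Ly0) (hLy1 : 0 < Ly1)
    (f g : EuclideanSpace ℝ (Fin dx) → EuclideanSpace ℝ (Fin dy) → ℝ)
    (ystar : EuclideanSpace ℝ (Fin dx) → EuclideanSpace ℝ (Fin dy))
    (zstar : EuclideanSpace ℝ (Fin dx) → EuclideanSpace ℝ (Fin dy))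
    (hf : ContDiff ℝ 1 (fun p : EuclideanSpace ℝ (Fin dx) × EuclideanSpace ℝ (Fin dy) =>
      f p.1 p.2))
    (hg : ContDiff ℝ 2 (fun p : EuclideanSpace ℝ (Fin dx) × EuclideanSpace ℝ (Fin dy) =>
      g p.1 p.2))
    -- g(x, ·) is μ-strongly convex with minimizer y*(x):
    (hsc : ∀ x, StrongConvexOn univ μ (g x))
    (hmin : ∀ x y, g x (ystar x) ≤ g x y)
    (hcrit : ∀ x, grady g x (ystar x) = 0)
    (hHess : ∀ x v, μ * ‖v‖ ^ 2 ≤ ⟪hessyy g x (ystar x) v, v⟫)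
    -- z*(x) = [∇_y² g(x, y*(x))]⁻¹ ∇_y f(x, y*(x)):
    (hzstar : ∀ x, zstar x = (hessyy g x (ystar x)).inverse (grady f x (ystar x)))
    -- (a) f is (L_{x,0}, L_{x,1}, L_{y,0}, L_{y,1})-smooth:
    (hfx : ∀ x y x' y',
      Real.sqrt (‖x - x'‖ ^ 2 + ‖y - y'‖ ^ 2) ≤ 1 / Real.sqrt (2 * (Lx1 ^ 2 + Ly1 ^ 2)) →
      ‖gradx f x y - gradx f x' y'‖ ≤
        (Lx0 + Lx1 * ‖gradx f x y‖) * Real.sqrt (‖x - x'‖ ^ 2 + ‖y - y'‖ ^ 2))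
    (hfy : ∀ x y x' y',
      Real.sqrt (‖x - x'‖ ^ 2 + ‖y - y'‖ ^ 2) ≤ 1 / Real.sqrt (2 * (Lx1 ^ 2 + Ly1 ^ 2)) →
      ‖grady f x y - grady f x' y'‖ ≤
        (Ly0 + Ly1 * ‖grady f x y‖) * Real.sqrt (‖x - x'‖ ^ 2 + ‖y - y'‖ ^ 2))
    -- (b) ‖∇_y f(x, y*(x))‖ ≤ M:
    (hMbound : ∀ x, ‖grady f x (ystar x)‖ ≤ M)
    -- (c) ‖∇_x∇_y g(u)‖ ≤ C_gxy:
    (hCbound : ∀ x y, ‖gradxy g x y‖ ≤ Cgxy)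
    -- (d) ∇_y² g is ρ-Lipschitz in operator norm as a function of u = (x, y):
    (hρLip : ∀ x y x' y', ‖hessyy g x y - hessyy g x' y'‖ ≤
      ρ * Real.sqrt (‖x - x'‖ ^ 2 + ‖y - y'‖ ^ 2))
    -- (e) y* is (C_gxy/μ)-Lipschitz:
    (hystarLip : ∀ x x', ‖ystar x - ystar x'‖ ≤ Cgxy / μ * ‖x - x'‖) :
    ∀ x x',
      ‖x - x'‖ ≤ 1 / Real.sqrt (2 * (1 + Cgxy ^ 2 / μ ^ 2) * (Lx1 ^ 2 + Ly1 ^ 2)) →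
      ‖zstar x - zstar x'‖ ≤
        Real.sqrt (1 + (Cgxy / μ) ^ 2) * (ρ * M / μ ^ 2 + (Ly0 + Ly1 * M) / μ) *
          ‖x - x'‖ := by
  intro x x' hxx'
  set c : ℝ := Cgxy / μ with hc
  have hcpos : 0 < c := div_pos hCgxy hμ
  set xd : ℝ := ‖x - x'‖ with hxd
  have hxd0 : 0 ≤ xd := norm_nonneg _
  set D : ℝ := Real.sqrt (‖x - x'‖ ^ 2 + ‖ystar x - ystar x'‖ ^ 2) with hD
  have hD0 : 0 ≤ D := Real.sqrt_nonneg _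
  have hyd : ‖ystar x - ystar x'‖ ≤ c * xd := hystarLip x x'
  -- D ≤ √(1+c²)·xd
  have hD_le : D ≤ Real.sqrt (1 + c ^ 2) * xd := by
    have h1 : ‖x - x'‖ ^ 2 + ‖ystar x - ystar x'‖ ^ 2 ≤ (1 + c ^ 2) * xd ^ 2 := by
      have := sq_nonneg (‖ystar x - ystar x'‖)
      nlinarith [norm_nonneg (ystar x - ystar x')]
    calc D ≤ Real.sqrt ((1 + c ^ 2) * xd ^ 2) := Real.sqrt_le_sqrt h1
      _ = Real.sqrt (1 + c ^ 2) * xd := by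
          rw [Real.sqrt_mul (by positivity), Real.sqrt_sq hxd0]
  -- split condition radius
  have hsqrt_split : Real.sqrt (2 * (1 + Cgxy ^ 2 / μ ^ 2) * (Lx1 ^ 2 + Ly1 ^ 2))
      = Real.sqrt (1 + c ^ 2) * Real.sqrt (2 * (Lx1 ^ 2 + Ly1 ^ 2)) := by
    rw [← Real.sqrt_mul (by positivity)]
    congr 1
    rw [hc, div_pow]
    ring
  have hr1 : (0:ℝ) < Real.sqrt (1 + c ^ 2) := Real.sqrt_pos.mpr (by positivity)
  have hr2 : (0:ℝ) < Real.sqrt (2 * (Lx1 ^ 2 + Ly1 ^ 2)) := Real.sqrt_pos.mpr (by positivity)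
  have hDcond : D ≤ 1 / Real.sqrt (2 * (Lx1 ^ 2 + Ly1 ^ 2)) := by
    calc D ≤ Real.sqrt (1 + c ^ 2) * xd := hD_le
      _ ≤ Real.sqrt (1 + c ^ 2) * (1 / (Real.sqrt (1 + c ^ 2) * Real.sqrt (2 * (Lx1 ^ 2 + Ly1 ^ 2)))) := by
          apply mul_le_mul_of_nonneg_left _ (le_of_lt hr1)
          rw [hxd] at hxx' ⊢
          calc ‖x - x'‖ ≤ 1 / Real.sqrt (2 * (1 + Cgxy ^ 2 / μ ^ 2) * (Lx1 ^ 2 + Ly1 ^ 2)) := hxx'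
            _ = 1 / (Real.sqrt (1 + c ^ 2) * Real.sqrt (2 * (Lx1 ^ 2 + Ly1 ^ 2))) := by
                rw [hsqrt_split]
      _ = 1 / Real.sqrt (2 * (Lx1 ^ 2 + Ly1 ^ 2)) := by
          field_simp
  -- operators
  set H := hessyy g x (ystar x) with hHdef
  set H' := hessyy g x' (ystar x') with hH'def
  set v := grady f x (ystar x) with hvdef
  set v' := grady f x' (ystar x') with hv'def
  obtain ⟨hR, hL, hN⟩ := hess_inv_props μ hμ H (hHess x)
  obtain ⟨hR', hL', hN'⟩ := hess_inv_props μ hμ H' (hHess x')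
  -- decomposition
  have hdecomp : zstar x - zstar x'
      = H.inverse (v - v') + H.inverse ((H' - H) (H'.inverse v')) := by
    rw [hzstar x, hzstar x', ← hHdef, ← hH'def, ← hvdef, ← hv'def]
    have e1 : (H' - H) (H'.inverse v') = v' - H (H'.inverse v') := by
      simp [ContinuousLinearMap.sub_apply, hR' v']
    rw [e1, map_sub, map_sub, hL (H'.inverse v')]
    abel
  have hvM : ‖v‖ ≤ M := hMbound x
  have hv'M : ‖v'‖ ≤ M := hMbound x'
  -- bound pieces
  have hb1 : ‖H.inverse (v - v')‖ ≤ (1 / μ) * ((Ly0 + Ly1 * M) * D) := by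
    have h1 : ‖H.inverse (v - v')‖ ≤ ‖H.inverse‖ * ‖v - v'‖ := H.inverse.le_opNorm _
    have h2 : ‖v - v'‖ ≤ (Ly0 + Ly1 * ‖v‖) * D := hfy x (ystar x) x' (ystar x') hDcond
    have h3 : (Ly0 + Ly1 * ‖v‖) * D ≤ (Ly0 + Ly1 * M) * D := by
      apply mul_le_mul_of_nonneg_right _ hD0
      nlinarith
    have h4 : ‖H.inverse‖ * ‖v - v'‖ ≤ (1 / μ) * ((Ly0 + Ly1 * M) * D) := by
      apply mul_le_mul hN (le_trans h2 h3) (norm_nonneg _) (by positivity)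
    linarith
  have hb2 : ‖H.inverse ((H' - H) (H'.inverse v'))‖ ≤ (1 / μ) * (ρ * D * ((1 / μ) * M)) := by
    have hHH' : ‖H' - H‖ ≤ ρ * D := by
      have := hρLip x' (ystar x') x (ystar x)
      rwa [norm_sub_rev x' x, norm_sub_rev (ystar x') (ystar x)] at this
    have h5 : ‖H'.inverse v'‖ ≤ (1 / μ) * M := by
      calc ‖H'.inverse v'‖ ≤ ‖H'.inverse‖ * ‖v'‖ := H'.inverse.le_opNorm _
        _ ≤ (1 / μ) * M := mul_le_mul hN' hv'M (norm_nonneg _) (by positivity)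
    calc ‖H.inverse ((H' - H) (H'.inverse v'))‖
        ≤ ‖H.inverse‖ * ‖(H' - H) (H'.inverse v')‖ := H.inverse.le_opNorm _
      _ ≤ ‖H.inverse‖ * (‖H' - H‖ * ‖H'.inverse v'‖) := by
          apply mul_le_mul_of_nonneg_left ((H' - H).le_opNorm _) (norm_nonneg _)
      _ ≤ (1 / μ) * (ρ * D * ((1 / μ) * M)) := by
          apply mul_le_mul hN _ (by positivity) (by positivity)
          apply mul_le_mul hHH' h5 (norm_nonneg _) (by positivity)
  have htot : ‖zstar x - zstar x'‖ ≤ (ρ * M / μ ^ 2 + (Ly0 + Ly1 * M) / μ) * D := by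
    calc ‖zstar x - zstar x'‖
        ≤ ‖H.inverse (v - v')‖ + ‖H.inverse ((H' - H) (H'.inverse v'))‖ := by
          rw [hdecomp]; exact norm_add_le _ _
      _ ≤ (1 / μ) * ((Ly0 + Ly1 * M) * D) + (1 / μ) * (ρ * D * ((1 / μ) * M)) :=
          add_le_add hb1 hb2
      _ = (ρ * M / μ ^ 2 + (Ly0 + Ly1 * M) / μ) * D := by
          field_simp
          ring
  calc ‖zstar x - zstar x'‖ ≤ (ρ * M / μ ^ 2 + (Ly0 + Ly1 * M) / μ) * D := htot
    _ ≤ (ρ * M / μ ^ 2 + (Ly0 + Ly1 * M) / μ) * (Real.sqrt (1 + c ^ 2) * xd) := by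
        apply mul_le_mul_of_nonneg_left hD_le (by positivity)
    _ = Real.sqrt (1 + (Cgxy / μ) ^ 2) * (ρ * M / μ ^ 2 + (Ly0 + Ly1 * M) / μ) * ‖x - x'‖ := by
        rw [← hc, ← hxd]; ring
end

section
/- Under the bilevel setup and the stated regularity assumptions, the total objective Φ(x) = f(x, y*(x)) satisfies a relaxed smoothness condition: for all x, x' with ‖x − x'‖ ≤ 1/√(2(1 + C_gxy²/μ²)(L_{x,1}² + L_{y,1}²)), ‖∇Φ(x) − ∇Φ(x')‖ ≤ (K₀ + K₁‖∇Φ(x')‖)·‖x − x'‖, where K₀ = √(1 + (C_gxy/μ)²)·(L_{x,0} + L_{x,1}·C_gxy·M/μ + (C_gxy/μ)(L_{y,0} + L_{y,1}M) + M(C_gxy·ρ + τμ)/μ²) and K₁ = √(1 + (C_gxy/μ)²)·L_{x,1}. -/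
open Set
open scoped RealInnerProductSpace

/-!
STATEMENT 5: Under the bilevel setup and stated regularity assumptions, the total
objective `Φ(x) = f(x, y*(x))` satisfies the relaxed smoothness condition
`‖∇Φ(x) − ∇Φ(x')‖ ≤ (K₀ + K₁‖∇Φ(x')‖)·‖x − x'‖` for all `x, x'` with
`‖x − x'‖ ≤ 1/√(2(1 + C_gxy²/μ²)(L_{x,1}² + L_{y,1}²))`, where
`K₀ = √(1 + (C_gxy/μ)²)(L_{x,0} + L_{x,1}C_gxyM/μ + (C_gxy/μ)(L_{y,0} + L_{y,1}M)
      + M(C_gxyρ + τμ)/μ²)` and `K₁ = √(1 + (C_gxy/μ)²)·L_{x,1}`.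
-/


-- quadratic growth at a minimizer of a strongly convex function
lemma quad_growth_aux {F : Type*} [NormedAddCommGroup F] [NormedSpace ℝ F] {μ : ℝ}
    {g : F → ℝ} (hsc : StrongConvexOn univ μ g) {y0 : F} (hmin : ∀ y, g y0 ≤ g y) (y : F) :
    μ / 2 * ‖y - y0‖ ^ 2 ≤ g y - g y0 := by
  set c : ℝ := μ / 2 * ‖y - y0‖ ^ 2 with hc
  have key : ∀ t ∈ Ioo (0:ℝ) 1, t * c ≤ g y - g y0 := by
    intro t ht
    obtain ⟨ht0, ht1⟩ := ht
    have h := hsc.2 (mem_univ y0) (mem_univ y) (le_of_lt ht0)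
      (by linarith : (0:ℝ) ≤ 1 - t) (by ring)
    have hlb := hmin (t • y0 + (1 - t) • y)
    have hnorm : ‖y0 - y‖ = ‖y - y0‖ := norm_sub_rev _ _
    rw [hnorm] at h
    simp only [smul_eq_mul] at h
    nlinarith [mul_pos ht0 (by linarith : (0:ℝ) < 1 - t)]
  have hne : (1:ℝ) ∈ closure (Ioo (0:ℝ) 1) := by
    rw [closure_Ioo (by norm_num : (0:ℝ) ≠ 1)]
    exact ⟨by norm_num, le_refl 1⟩
  haveI := mem_closure_iff_nhdsWithin_neBot.mp hne
  have htend : Filter.Tendsto (fun t : ℝ => t * c) (nhdsWithin 1 (Ioo (0:ℝ) 1)) (nhds c) := by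
    have : Filter.Tendsto (fun t : ℝ => t * c) (nhds 1) (nhds (1 * c)) :=
      (continuous_id.mul continuous_const).tendsto 1
    rw [one_mul] at this
    exact this.mono_left nhdsWithin_le_nhds
  exact le_of_tendsto htend (Filter.eventually_iff_exists_mem.mpr
    ⟨Ioo (0:ℝ) 1, self_mem_nhdsWithin, key⟩)

-- inverse facts for a coercive operator on a finite-dimensional Hilbert space
lemma inv_facts_aux {n : ℕ} {μ : ℝ} (hμ : 0 < μ)
    (H : EuclideanSpace ℝ (Fin n) →L[ℝ] EuclideanSpace ℝ (Fin n))
    (hc : ∀ v, μ * ‖v‖ ^ 2 ≤ ⟪H v, v⟫) :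
    (∀ v, H (H.inverse v) = v) ∧ (∀ v, H.inverse (H v) = v) ∧
      (∀ v, ‖H.inverse v‖ ≤ (1 / μ) * ‖v‖) := by
  have hlow : ∀ v, μ * ‖v‖ ≤ ‖H v‖ := by
    intro v
    rcases eq_or_ne v 0 with rfl | hv
    · simp
    · have h1 := hc v
      have h2 : ⟪H v, v⟫ ≤ ‖H v‖ * ‖v‖ := real_inner_le_norm _ _
      have hv0 : 0 < ‖v‖ := norm_pos_iff.mpr hv
      nlinarith
  have hinj : Function.Injective H := by
    intro u w huw
    have : H (u - w) = 0 := by rw [map_sub, huw, sub_self]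
    have h := hlow (u - w)
    rw [this, norm_zero] at h
    have : ‖u - w‖ ≤ 0 := by nlinarith
    have : u - w = 0 := norm_le_zero_iff.mp this
    exact sub_eq_zero.mp this
  have hsurj : Function.Surjective H :=
    (LinearMap.injective_iff_surjective (f := (H : EuclideanSpace ℝ (Fin n) →ₗ[ℝ] EuclideanSpace ℝ (Fin n)))).mp hinj
  let e₀ : EuclideanSpace ℝ (Fin n) ≃ₗ[ℝ] EuclideanSpace ℝ (Fin n) :=
    LinearEquiv.ofBijective (H : EuclideanSpace ℝ (Fin n) →ₗ[ℝ] EuclideanSpace ℝ (Fin n)) ⟨hinj, hsurj⟩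
  let e : EuclideanSpace ℝ (Fin n) ≃L[ℝ] EuclideanSpace ℝ (Fin n) := e₀.toContinuousLinearEquiv
  have heH : (e : EuclideanSpace ℝ (Fin n) →L[ℝ] EuclideanSpace ℝ (Fin n)) = H := by
    ext v; rfl
  have hinv : H.inverse = (e.symm : EuclideanSpace ℝ (Fin n) →L[ℝ] EuclideanSpace ℝ (Fin n)) := by
    rw [← heH]; exact ContinuousLinearMap.inverse_equiv e
  have h1 : ∀ v, H (H.inverse v) = v := by
    intro v; rw [hinv, ← heH]
    exact e.apply_symm_apply v
  have h2 : ∀ v, H.inverse (H v) = v := by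
    intro v; rw [hinv, ← heH]
    exact e.symm_apply_apply v
  refine ⟨h1, h2, fun v => ?_⟩
  have := hlow (H.inverse v)
  rw [h1 v] at this
  rw [div_mul_eq_mul_div, le_div_iff₀ hμ, mul_comm]
  linarith


-- norm of adjoint
example {dx dy : ℕ} (A : EuclideanSpace ℝ (Fin dx) →L[ℝ] EuclideanSpace ℝ (Fin dy)) :
    ‖ContinuousLinearMap.adjoint A‖ = ‖A‖ := ContinuousLinearMap.adjoint.norm_map A

lemma grady_eq {dx dy : ℕ} (g : EuclideanSpace ℝ (Fin dx) → EuclideanSpace ℝ (Fin dy) → ℝ)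
    (x : EuclideanSpace ℝ (Fin dx)) (y : EuclideanSpace ℝ (Fin dy)) :
    grady g x y = (InnerProductSpace.toDual ℝ (EuclideanSpace ℝ (Fin dy))).symm
      (fderiv ℝ (fun y' => g x y') y) := rfl

lemma grady_contDiff_x {dx dy : ℕ} {g : EuclideanSpace ℝ (Fin dx) → EuclideanSpace ℝ (Fin dy) → ℝ}
    (hg : ContDiff ℝ 2 (fun p : EuclideanSpace ℝ (Fin dx) × EuclideanSpace ℝ (Fin dy) => g p.1 p.2))
    (y : EuclideanSpace ℝ (Fin dy)) :
    ContDiff ℝ 1 (fun x => grady g x y) := by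
  have hK : ContDiff ℝ 1 (fun x => fderiv ℝ (fun y' => g x y') y) := by
    have := ContDiff.fderiv (f := g) (g := fun _ : EuclideanSpace ℝ (Fin dx) => y)
      (m := 2) (n := 1) hg contDiff_const (by norm_num)
    exact this
  simp only [grady_eq]
  exact (LinearIsometryEquiv.contDiff _).comp hK

-- ∇_y g is Cgxy-Lipschitz in x
lemma grady_lip_x {dx dy : ℕ} {g : EuclideanSpace ℝ (Fin dx) → EuclideanSpace ℝ (Fin dy) → ℝ}
    (hg : ContDiff ℝ 2 (fun p : EuclideanSpace ℝ (Fin dx) × EuclideanSpace ℝ (Fin dy) => g p.1 p.2))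
    {Cgxy : ℝ} (hCbound : ∀ x y, ‖gradxy g x y‖ ≤ Cgxy)
    (y : EuclideanSpace ℝ (Fin dy)) (x x' : EuclideanSpace ℝ (Fin dx)) :
    ‖grady g x y - grady g x' y‖ ≤ Cgxy * ‖x - x'‖ :=
  Convex.norm_image_sub_le_of_norm_fderiv_le (𝕜 := ℝ)
    (fun z _ => ((grady_contDiff_x hg y).differentiable one_ne_zero).differentiableAt)
    (fun z _ => by
      have : ‖fderiv ℝ (fun x'' => grady g x'' y) z‖ = ‖gradxy g z y‖ :=
        (ContinuousLinearMap.adjoint.norm_map _).symm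
      rw [this]; exact hCbound z y)
    convex_univ (mem_univ x') (mem_univ x)

-- contDiff of g x in y
lemma gx_contDiff {dx dy : ℕ} {g : EuclideanSpace ℝ (Fin dx) → EuclideanSpace ℝ (Fin dy) → ℝ}
    (hg : ContDiff ℝ 2 (fun p : EuclideanSpace ℝ (Fin dx) × EuclideanSpace ℝ (Fin dy) => g p.1 p.2))
    (x : EuclideanSpace ℝ (Fin dx)) : ContDiff ℝ 2 (fun y => g x y) :=
  hg.comp (contDiff_const.prodMk contDiff_id)

-- L3: difference bound
lemma gdiff_bound {dx dy : ℕ} {g : EuclideanSpace ℝ (Fin dx) → EuclideanSpace ℝ (Fin dy) → ℝ}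
    (hg : ContDiff ℝ 2 (fun p : EuclideanSpace ℝ (Fin dx) × EuclideanSpace ℝ (Fin dy) => g p.1 p.2))
    {Cgxy : ℝ} (hCbound : ∀ x y, ‖gradxy g x y‖ ≤ Cgxy)
    (x x' : EuclideanSpace ℝ (Fin dx)) (y1 y2 : EuclideanSpace ℝ (Fin dy)) :
    (g x y2 - g x' y2) - (g x y1 - g x' y1) ≤ Cgxy * ‖x - x'‖ * ‖y2 - y1‖ := by
  have hdx : Differentiable ℝ (fun y => g x y) := (gx_contDiff hg x).differentiable (by norm_num)
  have hdx' : Differentiable ℝ (fun y => g x' y) := (gx_contDiff hg x').differentiable (by norm_num)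
  have key : ∀ z : EuclideanSpace ℝ (Fin dy),
      ‖fderiv ℝ (fun y => g x y - g x' y) z‖ ≤ Cgxy * ‖x - x'‖ := by
    intro z
    rw [fderiv_fun_sub (hdx z) (hdx' z)]
    have : ‖fderiv ℝ (fun y => g x y) z - fderiv ℝ (fun y => g x' y) z‖
        = ‖grady g x z - grady g x' z‖ := by
      rw [grady_eq, grady_eq, ← map_sub]
      exact (LinearIsometryEquiv.norm_map _ _).symm
    rw [this]
    exact grady_lip_x hg hCbound z x x'
  have := Convex.norm_image_sub_le_of_norm_fderiv_le (𝕜 := ℝ)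
    (f := fun y => g x y - g x' y)
    (fun z _ => (hdx z).sub (hdx' z))
    (fun z _ => key z) convex_univ (mem_univ y1) (mem_univ y2)
  calc (g x y2 - g x' y2) - (g x y1 - g x' y1)
      ≤ ‖(g x y2 - g x' y2) - (g x y1 - g x' y1)‖ := le_abs_self _
    _ ≤ Cgxy * ‖x - x'‖ * ‖y2 - y1‖ := this

lemma ystar_lip {dx dy : ℕ} {g : EuclideanSpace ℝ (Fin dx) → EuclideanSpace ℝ (Fin dy) → ℝ}
    {μ Cgxy : ℝ} (hμ : 0 < μ) (hCgxy : 0 < Cgxy)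
    (hg : ContDiff ℝ 2 (fun p : EuclideanSpace ℝ (Fin dx) × EuclideanSpace ℝ (Fin dy) => g p.1 p.2))
    {ystar : EuclideanSpace ℝ (Fin dx) → EuclideanSpace ℝ (Fin dy)}
    (hsc : ∀ x, StrongConvexOn univ μ (g x))
    (hmin : ∀ x y, g x (ystar x) ≤ g x y)
    (hCbound : ∀ x y, ‖gradxy g x y‖ ≤ Cgxy)
    (x x' : EuclideanSpace ℝ (Fin dx)) :
    ‖ystar x - ystar x'‖ ≤ Cgxy / μ * ‖x - x'‖ := by
  set y1 := ystar x
  set y2 := ystar x'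
  have q1 : μ / 2 * ‖y2 - y1‖ ^ 2 ≤ g x y2 - g x y1 :=
    quad_growth_aux (hsc x) (hmin x) y2
  have q2 : μ / 2 * ‖y1 - y2‖ ^ 2 ≤ g x' y1 - g x' y2 :=
    quad_growth_aux (hsc x') (hmin x') y1
  have q3 : (g x y2 - g x' y2) - (g x y1 - g x' y1) ≤ Cgxy * ‖x - x'‖ * ‖y2 - y1‖ :=
    gdiff_bound hg hCbound x x' y1 y2
  have hnn : ‖y1 - y2‖ = ‖y2 - y1‖ := norm_sub_rev _ _
  rw [hnn] at q2 ⊢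
  rcases eq_or_lt_of_le (norm_nonneg (y2 - y1)) with h0 | h0
  · rw [← h0]; positivity
  · have hsum : μ * ‖y2 - y1‖ ^ 2 ≤ Cgxy * ‖x - x'‖ * ‖y2 - y1‖ := by nlinarith
    rw [div_mul_eq_mul_div, le_div_iff₀ hμ]
    nlinarith

set_option maxHeartbeats 2000000 in
theorem Phi_relaxed_smooth
    {dx dy : ℕ} (μ Cgxy M ρ τ Lx0 Lx1 Ly0 Ly1 : ℝ)
    (hμ : 0 < μ) (hCgxy : 0 < Cgxy) (hM : 0 < M) (hρ : 0 < ρ) (hτ : 0 < τ)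
    (hLx0 : 0 < Lx0) (hLx1 : 0 < Lx1) (hLy0 : 0 < Ly0) (hLy1 : 0 < Ly1)
    (f g : EuclideanSpace ℝ (Fin dx) → EuclideanSpace ℝ (Fin dy) → ℝ)
    (ystar : EuclideanSpace ℝ (Fin dx) → EuclideanSpace ℝ (Fin dy))
    (hf : ContDiff ℝ 1 (fun p : EuclideanSpace ℝ (Fin dx) × EuclideanSpace ℝ (Fin dy) =>
      f p.1 p.2))
    (hg : ContDiff ℝ 2 (fun p : EuclideanSpace ℝ (Fin dx) × EuclideanSpace ℝ (Fin dy) =>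
      g p.1 p.2))
    -- g(x, ·) is μ-strongly convex with minimizer y*(x):
    (hsc : ∀ x, StrongConvexOn univ μ (g x))
    (hmin : ∀ x y, g x (ystar x) ≤ g x y)
    (hcrit : ∀ x, grady g x (ystar x) = 0)
    (hHess : ∀ x v, μ * ‖v‖ ^ 2 ≤ ⟪hessyy g x (ystar x) v, v⟫)
    -- the lower-level solution map is differentiable:
    (hystar : Differentiable ℝ ystar)
    -- the hypergradient formula:
    (hgradPhi : ∀ x, gradient (fun x' => f x' (ystar x')) x =
      gradx f x (ystar x) -
        gradxy g x (ystar x)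
          ((hessyy g x (ystar x)).inverse (grady f x (ystar x))))
    -- (a) f is (L_{x,0}, L_{x,1}, L_{y,0}, L_{y,1})-smooth:
    (hfx : ∀ x y x' y',
      Real.sqrt (‖x - x'‖ ^ 2 + ‖y - y'‖ ^ 2) ≤ 1 / Real.sqrt (2 * (Lx1 ^ 2 + Ly1 ^ 2)) →
      ‖gradx f x y - gradx f x' y'‖ ≤
        (Lx0 + Lx1 * ‖gradx f x y‖) * Real.sqrt (‖x - x'‖ ^ 2 + ‖y - y'‖ ^ 2))
    (hfy : ∀ x y x' y',
      Real.sqrt (‖x - x'‖ ^ 2 + ‖y - y'‖ ^ 2) ≤ 1 / Real.sqrt (2 * (Lx1 ^ 2 + Ly1 ^ 2)) →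
      ‖grady f x y - grady f x' y'‖ ≤
        (Ly0 + Ly1 * ‖grady f x y‖) * Real.sqrt (‖x - x'‖ ^ 2 + ‖y - y'‖ ^ 2))
    -- (b) ‖∇_y f(x, y*(x))‖ ≤ M:
    (hMbound : ∀ x, ‖grady f x (ystar x)‖ ≤ M)
    -- (c) ‖∇_x∇_y g(u)‖ ≤ C_gxy:
    (hCbound : ∀ x y, ‖gradxy g x y‖ ≤ Cgxy)
    -- (d) ∇_x∇_y g is τ-Lipschitz and ∇_y² g is ρ-Lipschitz in operator norm:
    (hτLip : ∀ x y x' y', ‖gradxy g x y - gradxy g x' y'‖ ≤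
      τ * Real.sqrt (‖x - x'‖ ^ 2 + ‖y - y'‖ ^ 2))
    (hρLip : ∀ x y x' y', ‖hessyy g x y - hessyy g x' y'‖ ≤
      ρ * Real.sqrt (‖x - x'‖ ^ 2 + ‖y - y'‖ ^ 2)) :
    ∀ x x',
      ‖x - x'‖ ≤ 1 / Real.sqrt (2 * (1 + Cgxy ^ 2 / μ ^ 2) * (Lx1 ^ 2 + Ly1 ^ 2)) →
      ‖gradient (fun x'' => f x'' (ystar x'')) x -
          gradient (fun x'' => f x'' (ystar x'')) x'‖ ≤
        (Real.sqrt (1 + (Cgxy / μ) ^ 2) *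
            (Lx0 + Lx1 * (Cgxy * M / μ) + Cgxy / μ * (Ly0 + Ly1 * M) +
              M * (Cgxy * ρ + τ * μ) / μ ^ 2) +
          Real.sqrt (1 + (Cgxy / μ) ^ 2) * Lx1 *
            ‖gradient (fun x'' => f x'' (ystar x'')) x'‖) *
          ‖x - x'‖ := by
  intro x x' hxx'
  -- Lipschitz property of ystar
  have hyl : ‖ystar x - ystar x'‖ ≤ Cgxy / μ * ‖x - x'‖ :=
    ystar_lip hμ hCgxy hg hsc hmin hCbound x x'
  set y := ystar x with hy
  set y' := ystar x' with hy'
  set r := ‖x - x'‖ with hrdef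
  have hr0 : 0 ≤ r := norm_nonneg _
  have hs0 : 0 ≤ ‖y - y'‖ := norm_nonneg _
  set D := Real.sqrt (r ^ 2 + ‖y - y'‖ ^ 2) with hDdef
  have hD0 : 0 ≤ D := Real.sqrt_nonneg _
  set S := Real.sqrt (1 + (Cgxy / μ) ^ 2) with hSdef
  have hS1 : 1 ≤ S := by
    have h1 : (1:ℝ) ≤ 1 + (Cgxy / μ) ^ 2 := by nlinarith [sq_nonneg (Cgxy / μ)]
    calc (1:ℝ) = Real.sqrt 1 := Real.sqrt_one.symm
      _ ≤ S := by rw [hSdef]; exact Real.sqrt_le_sqrt h1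
  have hS0 : 0 < S := by linarith
  have hDS : D ≤ S * r := by
    rw [hDdef, hSdef]
    have h1 : r ^ 2 + ‖y - y'‖ ^ 2 ≤ (1 + (Cgxy / μ) ^ 2) * r ^ 2 := by
      have hsq : ‖y - y'‖ ^ 2 ≤ (Cgxy / μ * r) ^ 2 := pow_le_pow_left₀ hs0 hyl 2
      have e : (Cgxy / μ * r) ^ 2 = (Cgxy / μ) ^ 2 * r ^ 2 := by ring
      nlinarith
    calc Real.sqrt (r ^ 2 + ‖y - y'‖ ^ 2) ≤ Real.sqrt ((1 + (Cgxy / μ) ^ 2) * r ^ 2) :=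
          Real.sqrt_le_sqrt h1
      _ = Real.sqrt (1 + (Cgxy / μ) ^ 2) * r := by
          rw [Real.sqrt_mul (by positivity), Real.sqrt_sq hr0]
  have hsplit : Real.sqrt (2 * (1 + Cgxy ^ 2 / μ ^ 2) * (Lx1 ^ 2 + Ly1 ^ 2))
      = S * Real.sqrt (2 * (Lx1 ^ 2 + Ly1 ^ 2)) := by
    rw [hSdef, div_pow, ← Real.sqrt_mul (by positivity)]
    congr 1
    ring
  have hsq2 : 0 < Real.sqrt (2 * (Lx1 ^ 2 + Ly1 ^ 2)) := Real.sqrt_pos.mpr (by positivity)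
  have hDsmall : D ≤ 1 / Real.sqrt (2 * (Lx1 ^ 2 + Ly1 ^ 2)) := by
    have h2 : r ≤ 1 / (S * Real.sqrt (2 * (Lx1 ^ 2 + Ly1 ^ 2))) := by
      rw [← hsplit]; exact hxx'
    calc D ≤ S * r := hDS
      _ ≤ S * (1 / (S * Real.sqrt (2 * (Lx1 ^ 2 + Ly1 ^ 2)))) :=
          mul_le_mul_of_nonneg_left h2 (le_of_lt hS0)
      _ = 1 / Real.sqrt (2 * (Lx1 ^ 2 + Ly1 ^ 2)) := by
          field_simp
  -- abbreviations
  set v := grady f x y with hv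
  set v' := grady f x' y' with hv'
  set Hm := hessyy g x y with hHm
  set Hm' := hessyy g x' y' with hHm'
  set G := gradxy g x y with hG
  set G' := gradxy g x' y' with hG'
  obtain ⟨happ, hleft, hinvb⟩ := inv_facts_aux hμ Hm (by rw [hHm, hy]; exact hHess x)
  obtain ⟨happ', hleft', hinvb'⟩ := inv_facts_aux hμ Hm' (by rw [hHm', hy']; exact hHess x')
  set a := Hm.inverse v with ha
  set a' := Hm'.inverse v' with ha'
  -- basic bounds
  have hvM : ‖v‖ ≤ M := by rw [hv, hy]; exact hMbound x
  have hv'M : ‖v'‖ ≤ M := by rw [hv', hy']; exact hMbound x'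
  have hGC : ‖G‖ ≤ Cgxy := by rw [hG]; exact hCbound x y
  have hG'C : ‖G'‖ ≤ Cgxy := by rw [hG']; exact hCbound x' y'
  have haM : ‖a‖ ≤ 1 / μ * M := by
    refine (hinvb v).trans ?_
    exact mul_le_mul_of_nonneg_left hvM (by positivity)
  have ha'M : ‖a'‖ ≤ 1 / μ * M := by
    refine (hinvb' v').trans ?_
    exact mul_le_mul_of_nonneg_left hv'M (by positivity)
  -- Lipschitz-type differences
  have hHdiff : ‖Hm - Hm'‖ ≤ ρ * D := by
    have h := hρLip x y x' y'
    rw [← hHm, ← hHm', ← hDdef] at h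
    exact h
  have hGdiff : ‖G - G'‖ ≤ τ * D := by
    have h := hτLip x y x' y'
    rw [← hG, ← hG', ← hDdef] at h
    exact h
  have hvv : ‖v - v'‖ ≤ (Ly0 + Ly1 * M) * D := by
    have h := hfy x y x' y' (by rw [← hDdef]; exact hDsmall)
    rw [← hv, ← hv', ← hDdef] at h
    refine h.trans ?_
    have h2 : Ly0 + Ly1 * ‖v‖ ≤ Ly0 + Ly1 * M :=
      add_le_add le_rfl (mul_le_mul_of_nonneg_left hvM hLy1.le)
    exact mul_le_mul_of_nonneg_right h2 hD0
  -- inverse difference bound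
  have t1 : ‖a - Hm'.inverse v‖ ≤ 1 / μ * (ρ * D) * (1 / μ * M) := by
    have e1 : a - Hm'.inverse v = Hm.inverse ((Hm' - Hm) (Hm'.inverse v)) := by
      have h2 : Hm' (Hm'.inverse v) = v := happ' v
      have h3 : Hm.inverse (Hm (Hm'.inverse v)) = Hm'.inverse v := hleft _
      calc a - Hm'.inverse v
          = Hm.inverse v - Hm.inverse (Hm (Hm'.inverse v)) := by rw [h3, ha]
        _ = Hm.inverse (Hm' (Hm'.inverse v)) - Hm.inverse (Hm (Hm'.inverse v)) := by rw [h2]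
        _ = Hm.inverse (Hm' (Hm'.inverse v) - Hm (Hm'.inverse v)) := (map_sub _ _ _).symm
        _ = Hm.inverse ((Hm' - Hm) (Hm'.inverse v)) := by
            rw [ContinuousLinearMap.sub_apply]
    rw [e1]
    have s1 : ‖(Hm' - Hm) (Hm'.inverse v)‖ ≤ ρ * D * (1 / μ * M) := by
      refine (ContinuousLinearMap.le_opNorm _ _).trans ?_
      have n1 : ‖Hm' - Hm‖ ≤ ρ * D := by rw [norm_sub_rev]; exact hHdiff
      have n2 : ‖Hm'.inverse v‖ ≤ 1 / μ * M :=
        (hinvb' v).trans (mul_le_mul_of_nonneg_left hvM (by positivity))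
      have hρD : 0 ≤ ρ * D := by positivity
      exact mul_le_mul n1 n2 (norm_nonneg _) hρD
    refine (hinvb _).trans ?_
    rw [mul_assoc]
    exact mul_le_mul_of_nonneg_left s1 (by positivity)
  have t2 : ‖Hm'.inverse v - a'‖ ≤ 1 / μ * ((Ly0 + Ly1 * M) * D) := by
    have e2 : Hm'.inverse v - a' = Hm'.inverse (v - v') := by rw [map_sub, ha']
    rw [e2]
    refine (hinvb' _).trans (mul_le_mul_of_nonneg_left hvv (by positivity))
  have haa' : ‖a - a'‖ ≤ 1 / μ * (ρ * D) * (1 / μ * M) + 1 / μ * ((Ly0 + Ly1 * M) * D) := by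
    calc ‖a - a'‖ = ‖(a - Hm'.inverse v) + (Hm'.inverse v - a')‖ := by rw [sub_add_sub_cancel]
      _ ≤ ‖a - Hm'.inverse v‖ + ‖Hm'.inverse v - a'‖ := norm_add_le _ _
      _ ≤ _ := add_le_add t1 t2
  -- B bound
  have hB : ‖G a - G' a'‖ ≤
      τ * D * (1 / μ * M) +
        Cgxy * (1 / μ * (ρ * D) * (1 / μ * M) + 1 / μ * ((Ly0 + Ly1 * M) * D)) := by
    have e3 : G a - G' a' = (G - G') a + G' (a - a') := by
      rw [ContinuousLinearMap.sub_apply, map_sub, sub_add_sub_cancel]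
    rw [e3]
    refine (norm_add_le _ _).trans (add_le_add ?_ ?_)
    · refine (ContinuousLinearMap.le_opNorm _ _).trans ?_
      exact mul_le_mul hGdiff haM (norm_nonneg _) (by positivity)
    · refine (ContinuousLinearMap.le_opNorm _ _).trans ?_
      exact mul_le_mul hG'C haa' (norm_nonneg _) hCgxy.le
  -- gradient formula and gradx bound
  have hPhix : gradient (fun x'' => f x'' (ystar x'')) x = gradx f x y - G a := by
    have h := hgradPhi x
    rw [← hy, ← hv, ← hHm, ← hG, ← ha] at h
    exact h
  have hPhix' : gradient (fun x'' => f x'' (ystar x'')) x' = gradx f x' y' - G' a' := by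
    have h := hgradPhi x'
    rw [← hy', ← hv', ← hHm', ← hG', ← ha'] at h
    exact h
  set P := ‖gradient (fun x'' => f x'' (ystar x'')) x'‖ with hP
  have hP0 : 0 ≤ P := norm_nonneg _
  have hgxb : ‖gradx f x' y'‖ ≤ P + Cgxy * (1 / μ * M) := by
    have e4 : gradx f x' y' = gradient (fun x'' => f x'' (ystar x'')) x' + G' a' := by
      rw [hPhix', sub_add_cancel]
    rw [e4]
    refine (norm_add_le _ _).trans (add_le_add le_rfl ?_)
    refine (ContinuousLinearMap.le_opNorm _ _).trans ?_
    exact mul_le_mul hG'C ha'M (norm_nonneg _) hCgxy.le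
  -- A bound
  have hAcond : Real.sqrt (‖x' - x‖ ^ 2 + ‖y' - y‖ ^ 2) ≤
      1 / Real.sqrt (2 * (Lx1 ^ 2 + Ly1 ^ 2)) := by
    rw [norm_sub_rev x' x, norm_sub_rev y' y, ← hrdef, ← hDdef]
    exact hDsmall
  have hA : ‖gradx f x y - gradx f x' y'‖ ≤ (Lx0 + Lx1 * (P + Cgxy * (1 / μ * M))) * D := by
    have h := hfx x' y' x y hAcond
    rw [norm_sub_rev] at h
    rw [norm_sub_rev x' x, norm_sub_rev y' y, ← hrdef, ← hDdef] at h
    refine h.trans ?_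
    have h2 : Lx0 + Lx1 * ‖gradx f x' y'‖ ≤ Lx0 + Lx1 * (P + Cgxy * (1 / μ * M)) :=
      add_le_add le_rfl (mul_le_mul_of_nonneg_left hgxb hLx1.le)
    exact mul_le_mul_of_nonneg_right h2 hD0
  -- combine
  have hsub : gradient (fun x'' => f x'' (ystar x'')) x -
      gradient (fun x'' => f x'' (ystar x'')) x' =
      (gradx f x y - gradx f x' y') - (G a - G' a') := by
    rw [hPhix, hPhix']
    exact sub_sub_sub_comm _ _ _ _
  set C0 : ℝ := Lx0 + Lx1 * (P + Cgxy * (1 / μ * M)) + τ * (1 / μ * M) +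
      Cgxy * (1 / μ * ρ * (1 / μ * M) + 1 / μ * (Ly0 + Ly1 * M)) with hC0
  have hC0nn : 0 ≤ C0 := by
    rw [hC0]
    have h1 : 0 ≤ Lx1 * (P + Cgxy * (1 / μ * M)) :=
      mul_nonneg hLx1.le (add_nonneg hP0 (by positivity))
    have h2 : 0 ≤ τ * (1 / μ * M) := by positivity
    have h3 : 0 ≤ Cgxy * (1 / μ * ρ * (1 / μ * M) + 1 / μ * (Ly0 + Ly1 * M)) := by positivity
    linarith [hLx0.le]
  have hmain : ‖gradient (fun x'' => f x'' (ystar x'')) x -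
      gradient (fun x'' => f x'' (ystar x'')) x'‖ ≤ C0 * D := by
    rw [hsub]
    have heq : (Lx0 + Lx1 * (P + Cgxy * (1 / μ * M))) * D +
        (τ * D * (1 / μ * M) +
          Cgxy * (1 / μ * (ρ * D) * (1 / μ * M) + 1 / μ * ((Ly0 + Ly1 * M) * D))) = C0 * D := by
      rw [hC0]; ring
    exact (norm_sub_le _ _).trans ((add_le_add hA hB).trans (le_of_eq heq))
  calc ‖gradient (fun x'' => f x'' (ystar x'')) x -
      gradient (fun x'' => f x'' (ystar x'')) x'‖
      ≤ C0 * D := hmain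
    _ ≤ C0 * (S * r) := mul_le_mul_of_nonneg_left hDS hC0nn
    _ = (S * (Lx0 + Lx1 * (Cgxy * M / μ) + Cgxy / μ * (Ly0 + Ly1 * M) +
          M * (Cgxy * ρ + τ * μ) / μ ^ 2) + S * Lx1 * P) * r := by
        rw [hC0]; field_simp; ring
end

section
/- Let Φ : ℝ^d → ℝ be differentiable, let r > 0 and K₀, K₁ ≥ 0, and suppose that for all x, x' ∈ ℝ^d with ‖x − x'‖ ≤ r one has ‖∇Φ(x) − ∇Φ(x')‖ ≤ (K₀ + K₁‖∇Φ(x')‖)·‖x − x'‖. Then for all x, x' with ‖x − x'‖ ≤ r: Φ(x) ≤ Φ(x') + ⟨∇Φ(x'), x − x'⟩ + ((K₀ + K₁‖∇Φ(x')‖)/2)·‖x − x'‖². -/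
open scoped RealInnerProductSpace

/-!
STATEMENT 6: Descent inequality for `(K₀, K₁)`-relaxed smooth functions: if
`‖∇Φ(x) − ∇Φ(x')‖ ≤ (K₀ + K₁‖∇Φ(x')‖)·‖x − x'‖` whenever `‖x − x'‖ ≤ r`, then
`Φ(x) ≤ Φ(x') + ⟨∇Φ(x'), x − x'⟩ + ((K₀ + K₁‖∇Φ(x')‖)/2)·‖x − x'‖²` whenever `‖x − x'‖ ≤ r`.
-/

theorem descent_inequality_relaxed_smooth
    {d : ℕ} (Φ : EuclideanSpace ℝ (Fin d) → ℝ) (hΦ : Differentiable ℝ Φ)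
    (r K₀ K₁ : ℝ) (hr : 0 < r) (hK₀ : 0 ≤ K₀) (hK₁ : 0 ≤ K₁)
    (hsm : ∀ x x' : EuclideanSpace ℝ (Fin d), ‖x - x'‖ ≤ r →
      ‖gradient Φ x - gradient Φ x'‖ ≤ (K₀ + K₁ * ‖gradient Φ x'‖) * ‖x - x'‖) :
    ∀ x x' : EuclideanSpace ℝ (Fin d), ‖x - x'‖ ≤ r →
      Φ x ≤ Φ x' + ⟪gradient Φ x', x - x'⟫ +
        (K₀ + K₁ * ‖gradient Φ x'‖) / 2 * ‖x - x'‖ ^ 2 := by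
  intro x x' hxx
  set u : EuclideanSpace ℝ (Fin d) := x - x' with hu
  set L : ℝ := K₀ + K₁ * ‖gradient Φ x'‖ with hL
  have hL0 : 0 ≤ L := by positivity
  -- gradient is continuous
  have hgcont : Continuous (gradient Φ) := by
    rw [continuous_iff_continuousAt]
    intro y
    have : ∀ z, ‖z - y‖ ≤ r →
        ‖gradient Φ z - gradient Φ y‖ ≤ (K₀ + K₁ * ‖gradient Φ y‖) * ‖z - y‖ :=
      fun z hz => hsm z y hz
    rw [Metric.continuousAt_iff]
    intro ε hε
    refine ⟨min r (ε / ((K₀ + K₁ * ‖gradient Φ y‖) + 1)), by positivity, fun {z} hz => ?_⟩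
    have hzr : ‖z - y‖ ≤ r := by
      rw [dist_eq_norm] at hz
      exact le_of_lt (lt_of_lt_of_le hz (min_le_left _ _))
    have h1 := this z hzr
    rw [dist_eq_norm]
    calc ‖gradient Φ z - gradient Φ y‖
        ≤ (K₀ + K₁ * ‖gradient Φ y‖) * ‖z - y‖ := h1
      _ ≤ ((K₀ + K₁ * ‖gradient Φ y‖) + 1) * ‖z - y‖ := by
          apply mul_le_mul_of_nonneg_right (by linarith) (norm_nonneg _)
      _ < ((K₀ + K₁ * ‖gradient Φ y‖) + 1) * (ε / ((K₀ + K₁ * ‖gradient Φ y‖) + 1)) := by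
          apply mul_lt_mul_of_pos_left _ (by positivity)
          rw [dist_eq_norm] at hz
          exact lt_of_lt_of_le hz (min_le_right _ _)
      _ = ε := by field_simp
  -- the path
  set γ : ℝ → EuclideanSpace ℝ (Fin d) := fun t => x' + t • u with hγ
  have hγ0 : γ 0 = x' := by simp [hγ]
  have hγ1 : γ 1 = x := by simp [hγ, hu]
  have hγderiv : ∀ t : ℝ, HasDerivAt γ u t := by
    intro t
    simpa [hγ] using ((hasDerivAt_id t).smul_const u).const_add x'
  have hγcont : Continuous γ := by continuity
  -- derivative of f := Φ ∘ γ
  set f' : ℝ → ℝ := fun t => ⟪gradient Φ (γ t), u⟫ with hf'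
  have hf'deriv : ∀ t : ℝ, HasDerivAt (fun s => Φ (γ s)) (f' t) t := by
    intro t
    have hg : HasFDerivAt Φ (InnerProductSpace.toDual ℝ _ (gradient Φ (γ t))) (γ t) :=
      (hΦ (γ t)).hasGradientAt.hasFDerivAt
    have := hg.comp_hasDerivAt t (hγderiv t)
    simpa [f', InnerProductSpace.toDual_apply_apply, Function.comp_def] using this
  have hf'cont : Continuous f' := (hgcont.comp hγcont).inner continuous_const
  -- FTC
  have hFTC : Φ x - Φ x' = ∫ t in (0:ℝ)..1, f' t := by
    rw [← hγ0, ← hγ1]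
    rw [intervalIntegral.integral_eq_sub_of_hasDerivAt
      (fun t _ => hf'deriv t) (hf'cont.intervalIntegrable 0 1)]
  -- pointwise bound
  have hbound : ∀ t ∈ Set.Icc (0:ℝ) 1, f' t ≤ ⟪gradient Φ x', u⟫ + L * t * ‖u‖ ^ 2 := by
    intro t ht
    have hγt : ‖γ t - x'‖ = t * ‖u‖ := by
      simp [hγ, norm_smul, abs_of_nonneg ht.1]
    have hγtr : ‖γ t - x'‖ ≤ r := by
      rw [hγt]
      calc t * ‖u‖ ≤ 1 * ‖u‖ := mul_le_mul_of_nonneg_right ht.2 (norm_nonneg _)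
        _ = ‖u‖ := one_mul _
        _ ≤ r := hxx
    have h1 : f' t - ⟪gradient Φ x', u⟫ = ⟪gradient Φ (γ t) - gradient Φ x', u⟫ := by
      simp [f', inner_sub_left]
    have h2 : ⟪gradient Φ (γ t) - gradient Φ x', u⟫ ≤ L * t * ‖u‖ ^ 2 := by
      calc ⟪gradient Φ (γ t) - gradient Φ x', u⟫
          ≤ ‖gradient Φ (γ t) - gradient Φ x'‖ * ‖u‖ := real_inner_le_norm _ _
        _ ≤ (L * ‖γ t - x'‖) * ‖u‖ := by
            apply mul_le_mul_of_nonneg_right (hsm (γ t) x' hγtr) (norm_nonneg _)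
        _ = L * t * ‖u‖ ^ 2 := by rw [hγt]; ring
    linarith [h1 ▸ h2]
  -- integrate the bound
  have hint : (∫ t in (0:ℝ)..1, f' t) ≤
      ∫ t in (0:ℝ)..1, (⟪gradient Φ x', u⟫ + L * t * ‖u‖ ^ 2) := by
    apply intervalIntegral.integral_mono_on (by norm_num)
      (hf'cont.intervalIntegrable 0 1)
      ((by fun_prop : Continuous fun t : ℝ => ⟪gradient Φ x', u⟫ + L * t * ‖u‖ ^ 2).intervalIntegrable 0 1)
    exact hbound
  have hrhs : (∫ t in (0:ℝ)..1, (⟪gradient Φ x', u⟫ + L * t * ‖u‖ ^ 2))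
      = ⟪gradient Φ x', u⟫ + L / 2 * ‖u‖ ^ 2 := by
    rw [intervalIntegral.integral_add (intervalIntegrable_const)
      ((by fun_prop : Continuous fun t : ℝ => L * t * ‖u‖ ^ 2).intervalIntegrable 0 1)]
    have : (∫ t in (0:ℝ)..1, L * t * ‖u‖ ^ 2) = L / 2 * ‖u‖ ^ 2 := by
      have : (fun t : ℝ => L * t * ‖u‖ ^ 2) = fun t : ℝ => (L * ‖u‖ ^ 2) * t := by
        funext t; ring
      rw [this, intervalIntegral.integral_const_mul, integral_id]
      ring
    rw [this]
    simp
  have := hFTC ▸ (hint.trans_eq hrhs)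
  linarith
end

section
/- For any ω > 0 and any vectors u, v in a real inner product space with v ≠ 0: −⟨u, v⟩/‖v‖ ≤ −ω‖u‖ − (1 − ω)‖v‖ + (1 + ω)‖v − u‖. -/
open scoped RealInnerProductSpace

/-!
STATEMENT 7: For any `ω > 0` and vectors `u, v` in a real inner product space with `v ≠ 0`:
`−⟨u, v⟩/‖v‖ ≤ −ω‖u‖ − (1 − ω)‖v‖ + (1 + ω)‖v − u‖`.
-/

theorem neg_inner_div_norm_le
    {V : Type*} [NormedAddCommGroup V] [InnerProductSpace ℝ V]
    (ω : ℝ) (hω : 0 < ω) (u v : V) (hv : v ≠ 0) :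
    -(⟪u, v⟫ / ‖v‖) ≤ -ω * ‖u‖ - (1 - ω) * ‖v‖ + (1 + ω) * ‖v - u‖ := by
  have hvpos : (0:ℝ) < ‖v‖ := norm_pos_iff.mpr hv
  have hcs : ⟪v - u, v⟫ ≤ ‖v - u‖ * ‖v‖ := real_inner_le_norm _ _
  have hexp : ⟪v - u, v⟫ = ‖v‖ ^ 2 - ⟪u, v⟫ := by
    rw [inner_sub_left, real_inner_self_eq_norm_sq]
  have h1 : -⟪u, v⟫ ≤ ‖v - u‖ * ‖v‖ - ‖v‖ ^ 2 := by nlinarith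
  have h2 : -(⟪u, v⟫ / ‖v‖) ≤ ‖v - u‖ - ‖v‖ := by
    rw [← neg_div, div_le_iff₀ hvpos]
    nlinarith
  have htri : ‖u‖ ≤ ‖v‖ + ‖v - u‖ := by
    calc ‖u‖ = ‖v - (v - u)‖ := by rw [sub_sub_cancel]
    _ ≤ ‖v‖ + ‖v - u‖ := norm_sub_le _ _
  nlinarith
end

section
/- Under the bilevel setup and stated assumptions, for any x ∈ ℝ^{d_x}, any y ∈ ℝ^{d_y} with ‖y − y*(x)‖ ≤ 1/√(2(L_{x,1}² + L_{y,1}²)), and any z ∈ ℝ^{d_y}, the deterministic hypergradient surrogate satisfies the bias bound ‖(∇_x f(x, y) − ∇_x∇_y g(x, y) z) − ∇Φ(x)‖ ≤ L_{x,1}·‖y − y*(x)‖·‖∇Φ(x)‖ + (L_{x,0} + L_{x,1}·C_gxy·M/μ + τM/μ)·‖y − y*(x)‖ + C_gxy·‖z − z*(x)‖. -/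
open Set
open scoped RealInnerProductSpace

/-!
STATEMENT 8: Bias bound for the deterministic hypergradient surrogate. Under the bilevel
setup and stated assumptions, for any `x`, any `y` with
`‖y − y*(x)‖ ≤ 1/√(2(L_{x,1}² + L_{y,1}²))`, and any `z`:
`‖(∇_x f(x, y) − ∇_x∇_y g(x, y) z) − ∇Φ(x)‖ ≤ L_{x,1}‖y − y*(x)‖‖∇Φ(x)‖
  + (L_{x,0} + L_{x,1}C_gxyM/μ + τM/μ)‖y − y*(x)‖ + C_gxy‖z − z*(x)‖`.
-/

theorem hypergradient_surrogate_bias_bound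
    {dx dy : ℕ} (μ Cgxy M τ Lx0 Lx1 Ly0 Ly1 : ℝ)
    (hμ : 0 < μ) (hCgxy : 0 < Cgxy) (hM : 0 < M) (hτ : 0 < τ)
    (hLx0 : 0 < Lx0) (hLx1 : 0 < Lx1) (hLy0 : 0 < Ly0) (hLy1 : 0 < Ly1)
    (f g : EuclideanSpace ℝ (Fin dx) → EuclideanSpace ℝ (Fin dy) → ℝ)
    (ystar : EuclideanSpace ℝ (Fin dx) → EuclideanSpace ℝ (Fin dy))
    (zstar : EuclideanSpace ℝ (Fin dx) → EuclideanSpace ℝ (Fin dy))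
    -- g(x, ·) is μ-strongly convex with minimizer y*(x):
    (hg : ContDiff ℝ 2 (fun p : EuclideanSpace ℝ (Fin dx) × EuclideanSpace ℝ (Fin dy) =>
      g p.1 p.2))
    (hsc : ∀ x, StrongConvexOn univ μ (g x))
    (hmin : ∀ x y, g x (ystar x) ≤ g x y)
    (hcrit : ∀ x, grady g x (ystar x) = 0)
    (hHess : ∀ x v, μ * ‖v‖ ^ 2 ≤ ⟪hessyy g x (ystar x) v, v⟫)
    -- z*(x) = [∇_y² g(x, y*(x))]⁻¹ ∇_y f(x, y*(x)):
    (hzstar : ∀ x, zstar x = (hessyy g x (ystar x)).inverse (grady f x (ystar x)))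
    -- the hypergradient formula:
    (hgradPhi : ∀ x, gradient (fun x' => f x' (ystar x')) x =
      gradx f x (ystar x) - gradxy g x (ystar x) (zstar x))
    -- (a) f is (L_{x,0}, L_{x,1}, L_{y,0}, L_{y,1})-smooth:
    (hfx : ∀ x y x' y',
      Real.sqrt (‖x - x'‖ ^ 2 + ‖y - y'‖ ^ 2) ≤ 1 / Real.sqrt (2 * (Lx1 ^ 2 + Ly1 ^ 2)) →
      ‖gradx f x y - gradx f x' y'‖ ≤
        (Lx0 + Lx1 * ‖gradx f x y‖) * Real.sqrt (‖x - x'‖ ^ 2 + ‖y - y'‖ ^ 2))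
    (hfy : ∀ x y x' y',
      Real.sqrt (‖x - x'‖ ^ 2 + ‖y - y'‖ ^ 2) ≤ 1 / Real.sqrt (2 * (Lx1 ^ 2 + Ly1 ^ 2)) →
      ‖grady f x y - grady f x' y'‖ ≤
        (Ly0 + Ly1 * ‖grady f x y‖) * Real.sqrt (‖x - x'‖ ^ 2 + ‖y - y'‖ ^ 2))
    -- (b) ‖∇_y f(x, y*(x))‖ ≤ M:
    (hMbound : ∀ x, ‖grady f x (ystar x)‖ ≤ M)
    -- (c) ‖∇_x∇_y g(u)‖ ≤ C_gxy:
    (hCbound : ∀ x y, ‖gradxy g x y‖ ≤ Cgxy)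
    -- (d) ∇_x∇_y g is τ-Lipschitz in operator norm:
    (hτLip : ∀ x y x' y', ‖gradxy g x y - gradxy g x' y'‖ ≤
      τ * Real.sqrt (‖x - x'‖ ^ 2 + ‖y - y'‖ ^ 2)) :
    ∀ x y z,
      ‖y - ystar x‖ ≤ 1 / Real.sqrt (2 * (Lx1 ^ 2 + Ly1 ^ 2)) →
      ‖(gradx f x y - gradxy g x y z) - gradient (fun x' => f x' (ystar x')) x‖ ≤
        Lx1 * ‖y - ystar x‖ * ‖gradient (fun x' => f x' (ystar x')) x‖ +
          (Lx0 + Lx1 * (Cgxy * M / μ) + τ * M / μ) * ‖y - ystar x‖ +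
          Cgxy * ‖z - zstar x‖ := by

  intro x y z hy
  set ys := ystar x with hys
  set zs := zstar x with hzs
  set Φ := gradient (fun x' => f x' (ystar x')) x with hΦ
  have hδ : (0:ℝ) ≤ ‖y - ys‖ := norm_nonneg _
  -- bound on ‖zs‖
  have hzsb : ‖zs‖ ≤ M / μ := by
    have hHn : ‖hessyy g x ys zs‖ ≤ M := by
      rw [hzs, hzstar x]
      by_cases h : (hessyy g x (ystar x)).IsInvertible
      · obtain ⟨e, he⟩ := h
        rw [← he, ContinuousLinearMap.inverse_equiv]
        simpa using hMbound x
      · rw [ContinuousLinearMap.inverse_of_not_isInvertible h]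
        simpa using le_of_lt hM
    have hq := hHess x zs
    have hCS : ⟪hessyy g x ys zs, zs⟫ ≤ ‖hessyy g x ys zs‖ * ‖zs‖ :=
      real_inner_le_norm _ _
    have h1 : μ * ‖zs‖ ^ 2 ≤ M * ‖zs‖ := by
      calc μ * ‖zs‖ ^ 2 ≤ ⟪hessyy g x ys zs, zs⟫ := hq
        _ ≤ ‖hessyy g x ys zs‖ * ‖zs‖ := hCS
        _ ≤ M * ‖zs‖ := by
            exact mul_le_mul_of_nonneg_right hHn (norm_nonneg _)
    rcases eq_or_lt_of_le (norm_nonneg zs) with h0 | h0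
    · rw [← h0]; positivity
    · rw [le_div_iff₀ hμ]
      nlinarith
  -- decomposition
  have hdecomp : (gradx f x y - gradxy g x y z) - Φ =
      (gradx f x y - gradx f x ys) + (gradxy g x ys - gradxy g x y) zs
        + gradxy g x y (zs - z) := by
    rw [hΦ, hgradPhi x, ← hys, ← hzs]
    simp only [ContinuousLinearMap.sub_apply, map_sub]
    abel
  -- bound A
  have hsqrt : Real.sqrt (‖x - x‖ ^ 2 + ‖y - ys‖ ^ 2) = ‖y - ys‖ := by
    simp [Real.sqrt_sq (norm_nonneg _)]
  have hsqrt' : Real.sqrt (‖x - x‖ ^ 2 + ‖ys - y‖ ^ 2) = ‖y - ys‖ := by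
    rw [norm_sub_rev ys y]
    exact hsqrt
  have hA0 := hfx x ys x y (by rw [hsqrt']; exact hy)
  rw [hsqrt'] at hA0
  have hA : ‖gradx f x y - gradx f x ys‖ ≤
      (Lx0 + Lx1 * ‖gradx f x ys‖) * ‖y - ys‖ := by
    rw [norm_sub_rev]; exact hA0
  -- bound on ‖gradx f x ys‖
  have hgx : ‖gradx f x ys‖ ≤ ‖Φ‖ + Cgxy * (M / μ) := by
    have : gradx f x ys = Φ + gradxy g x ys zs := by
      rw [hΦ, hgradPhi x, ← hys, ← hzs]; abel
    rw [this]
    calc ‖Φ + gradxy g x ys zs‖ ≤ ‖Φ‖ + ‖gradxy g x ys zs‖ := norm_add_le _ _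
      _ ≤ ‖Φ‖ + Cgxy * (M / μ) := by
          gcongr
          calc ‖gradxy g x ys zs‖ ≤ ‖gradxy g x ys‖ * ‖zs‖ :=
              (gradxy g x ys).le_opNorm zs
            _ ≤ Cgxy * (M / μ) := by
                apply mul_le_mul (hCbound x ys) hzsb (norm_nonneg _) (le_of_lt hCgxy)
  -- bound B
  have hB : ‖(gradxy g x ys - gradxy g x y) zs‖ ≤ τ * (M / μ) * ‖y - ys‖ := by
    calc ‖(gradxy g x ys - gradxy g x y) zs‖
        ≤ ‖gradxy g x ys - gradxy g x y‖ * ‖zs‖ :=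
          (gradxy g x ys - gradxy g x y).le_opNorm zs
      _ ≤ (τ * ‖y - ys‖) * (M / μ) := by
          apply mul_le_mul _ hzsb (norm_nonneg _) (by positivity)
          have := hτLip x ys x y
          rw [hsqrt'] at this
          exact this
      _ = τ * (M / μ) * ‖y - ys‖ := by ring
  -- bound C
  have hC : ‖gradxy g x y (zs - z)‖ ≤ Cgxy * ‖z - zs‖ := by
    calc ‖gradxy g x y (zs - z)‖ ≤ ‖gradxy g x y‖ * ‖zs - z‖ :=
        (gradxy g x y).le_opNorm _
      _ ≤ Cgxy * ‖z - zs‖ := by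
          rw [norm_sub_rev]
          exact mul_le_mul_of_nonneg_right (hCbound x y) (norm_nonneg _)
  have htotal : ‖(gradx f x y - gradxy g x y z) - Φ‖ ≤
      (Lx0 + Lx1 * ‖gradx f x ys‖) * ‖y - ys‖ + τ * (M / μ) * ‖y - ys‖
        + Cgxy * ‖z - zs‖ := by
    rw [hdecomp]
    calc ‖(gradx f x y - gradx f x ys) + (gradxy g x ys - gradxy g x y) zs
          + gradxy g x y (zs - z)‖
        ≤ ‖(gradx f x y - gradx f x ys) + (gradxy g x ys - gradxy g x y) zs‖
          + ‖gradxy g x y (zs - z)‖ := norm_add_le _ _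
      _ ≤ ‖gradx f x y - gradx f x ys‖ + ‖(gradxy g x ys - gradxy g x y) zs‖
          + ‖gradxy g x y (zs - z)‖ := by gcongr; exact norm_add_le _ _
      _ ≤ _ := add_le_add (add_le_add hA hB) hC
  refine htotal.trans ?_
  have hΦn : (0:ℝ) ≤ ‖Φ‖ := norm_nonneg _
  have key : Lx1 * (‖gradx f x ys‖ * ‖y - ys‖) ≤
      Lx1 * ((‖Φ‖ + Cgxy * (M / μ)) * ‖y - ys‖) :=
    mul_le_mul_of_nonneg_left (mul_le_mul_of_nonneg_right hgx hδ) hLx1.le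
  ring_nf at key ⊢
  nlinarith [key]
end

section
/- Let Φ : ℝ^d → ℝ be differentiable, r > 0, K₀, K₁ ≥ 0 with ‖∇Φ(a) − ∇Φ(b)‖ ≤ (K₀ + K₁‖∇Φ(b)‖)·‖a − b‖ whenever ‖a − b‖ ≤ r. Let 0 < η ≤ r, let m ∈ ℝ^d with m ≠ 0, and set x' = x − η·m/‖m‖. Then Φ(x') − Φ(x) ≤ −(η − K₁η²/2)·‖∇Φ(x)‖ + K₀η²/2 + 2η·‖m − ∇Φ(x)‖. -/
/-!
STATEMENT 9: One step of normalized update under `(K₀, K₁)`-relaxed smoothness: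
if `‖∇Φ(a) − ∇Φ(b)‖ ≤ (K₀ + K₁‖∇Φ(b)‖)·‖a − b‖` whenever `‖a − b‖ ≤ r`, `0 < η ≤ r`,
`m ≠ 0` and `x' = x − η·m/‖m‖`, then
`Φ(x') − Φ(x) ≤ −(η − K₁η²/2)·‖∇Φ(x)‖ + K₀η²/2 + 2η·‖m − ∇Φ(x)‖`.
-/

theorem normalized_step_descent
    {d : ℕ} (Φ : EuclideanSpace ℝ (Fin d) → ℝ) (hΦ : Differentiable ℝ Φ)
    (r K₀ K₁ : ℝ) (hr : 0 < r) (hK₀ : 0 ≤ K₀) (hK₁ : 0 ≤ K₁)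
    (hsm : ∀ a b : EuclideanSpace ℝ (Fin d), ‖a - b‖ ≤ r →
      ‖gradient Φ a - gradient Φ b‖ ≤ (K₀ + K₁ * ‖gradient Φ b‖) * ‖a - b‖)
    (η : ℝ) (hη : 0 < η) (hηr : η ≤ r)
    (x m : EuclideanSpace ℝ (Fin d)) (hm : m ≠ 0) :
    Φ (x - (η / ‖m‖) • m) - Φ x ≤
      -(η - K₁ * η ^ 2 / 2) * ‖gradient Φ x‖ + K₀ * η ^ 2 / 2 +
        2 * η * ‖m - gradient Φ x‖ := by
  set g : EuclideanSpace ℝ (Fin d) := gradient Φ x with hg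
  have hmn : (0:ℝ) < ‖m‖ := norm_pos_iff.mpr hm
  set v : EuclideanSpace ℝ (Fin d) := (-(η/‖m‖)) • m with hv
  have hxv : x - (η/‖m‖) • m = x + v := by rw [hv]; module
  have hnv : ‖v‖ = η := by
    rw [hv, norm_smul, Real.norm_eq_abs, abs_neg, abs_of_pos (div_pos hη hmn)]
    field_simp
  set L : ℝ := (K₀ + K₁ * ‖g‖) * η^2 with hL
  have hgn : (0:ℝ) ≤ ‖g‖ := norm_nonneg _
  have hL0 : 0 ≤ L := by positivity
  set F : ℝ → ℝ := fun t => Φ (x + t • v) - t * inner ℝ g v - L * t^2/2 with hF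
  have hderiv : ∀ t : ℝ,
      HasDerivAt F ((inner ℝ (gradient Φ (x + t•v)) v : ℝ) - inner ℝ g v - L*t) t := by
    intro t
    have hline : HasDerivAt (fun t : ℝ => x + t•v) v t := by
      simpa using ((hasDerivAt_id t).smul_const v).const_add x
    have hgrad := (hΦ (x + t•v)).hasGradientAt
    have h1 : HasDerivAt (fun t : ℝ => Φ (x + t•v))
        ((inner ℝ (gradient Φ (x + t•v)) v : ℝ)) t := by
      exact (hgrad.hasFDerivAt.comp_hasDerivAt t hline)
    have h2 : HasDerivAt (fun t : ℝ => t * inner ℝ g v) ((inner ℝ g v : ℝ)) t := by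
      simpa using (hasDerivAt_id t).mul_const ((inner ℝ g v : ℝ))
    have h3 : HasDerivAt (fun t : ℝ => L * t^2/2) (L*t) t := by
      have := ((hasDerivAt_pow 2 t).const_mul L).div_const 2
      refine this.congr_deriv ?_
      ring
    exact (h1.sub h2).sub h3
  have hmono : F 1 ≤ F 0 := by
    have hcont : ContinuousOn F (Set.Icc 0 1) :=
      fun t _ => (hderiv t).continuousAt.continuousWithinAt
    have hanti : AntitoneOn F (Set.Icc 0 1) := by
      apply antitoneOn_of_deriv_nonpos (convex_Icc 0 1) hcont
      · intro t ht
        exact (hderiv t).differentiableAt.differentiableWithinAt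
      · intro t ht
        rw [interior_Icc] at ht
        rw [(hderiv t).deriv]
        have hd : x + t • v - x = t • v := by abel
        have hdist : ‖(x + t • v) - x‖ = t * η := by
          rw [hd, norm_smul, Real.norm_eq_abs, abs_of_pos ht.1, hnv]
        have hle : ‖(x + t • v) - x‖ ≤ r := by
          rw [hdist]
          nlinarith [ht.1, ht.2]
        have hsm' := hsm (x + t•v) x hle
        have key : (inner ℝ (gradient Φ (x + t•v)) v : ℝ) - inner ℝ g v ≤ L * t := by
          have h1 : (inner ℝ (gradient Φ (x + t•v)) v : ℝ) - inner ℝ g v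
              = inner ℝ (gradient Φ (x + t•v) - g) v := (inner_sub_left _ _ _).symm
          rw [h1]
          calc (inner ℝ (gradient Φ (x + t•v) - g) v : ℝ)
              ≤ ‖gradient Φ (x + t•v) - g‖ * ‖v‖ := real_inner_le_norm _ _
            _ ≤ ((K₀ + K₁ * ‖g‖) * (t * η)) * η := by
                rw [hnv]
                apply mul_le_mul_of_nonneg_right _ hη.le
                rw [← hdist]
                exact hsm'
            _ = L * t := by rw [hL]; ring
        linarith
    exact hanti (Set.left_mem_Icc.mpr zero_le_one) (Set.right_mem_Icc.mpr zero_le_one)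
      zero_le_one
  have hF1 : F 1 = Φ (x + v) - inner ℝ g v - L/2 := by simp [hF]
  have hF0 : F 0 = Φ x := by simp [hF]
  have hstep : Φ (x + v) - Φ x ≤ (inner ℝ g v : ℝ) + L/2 := by
    rw [hF1, hF0] at hmono; linarith
  have hinner : (inner ℝ g v : ℝ) ≤ -η * (‖g‖ - 2 * ‖m - g‖) := by
    have h1 : (inner ℝ g m : ℝ) ≥ ‖m‖ * (‖g‖ - 2 * ‖m - g‖) := by
      have h2 : (inner ℝ g m : ℝ) = inner ℝ m m - inner ℝ (m - g) m := by
        rw [inner_sub_left]; ring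
      have h3 : (inner ℝ (m - g) m : ℝ) ≤ ‖m - g‖ * ‖m‖ := real_inner_le_norm _ _
      have h4 : (inner ℝ m m : ℝ) = ‖m‖^2 := real_inner_self_eq_norm_sq m
      have h5 : ‖g‖ ≤ ‖m‖ + ‖m - g‖ := by
        have := norm_sub_le m (m - g)
        simpa using this
      nlinarith [norm_nonneg (m - g)]
    have h6 : (inner ℝ g v : ℝ) = -(η/‖m‖) * inner ℝ g m := by
      rw [hv, inner_smul_right]
    rw [h6]
    have h7 : -(η/‖m‖) * (inner ℝ g m : ℝ) ≤ -(η/‖m‖) * (‖m‖ * (‖g‖ - 2 * ‖m - g‖)) := by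
      apply mul_le_mul_of_nonpos_left h1
      have := div_pos hη hmn
      linarith
    calc -(η/‖m‖) * (inner ℝ g m : ℝ) ≤ -(η/‖m‖) * (‖m‖ * (‖g‖ - 2 * ‖m - g‖)) := h7
      _ = -η * (‖g‖ - 2 * ‖m - g‖) := by field_simp
  rw [hxv]
  have : Φ (x + v) - Φ x ≤ -η * (‖g‖ - 2 * ‖m - g‖) + (K₀ + K₁ * ‖g‖) * η^2/2 := by
    rw [hL] at hstep; linarith
  refine this.trans (le_of_eq ?_)
  ring
end

section
/- Let Φ : ℝ^d → ℝ be differentiable with Φ* = inf_{x∈ℝ^d} Φ(x) > −∞, r > 0, K₀, K₁ ≥ 0 with ‖∇Φ(a) − ∇Φ(b)‖ ≤ (K₀ + K₁‖∇Φ(b)‖)·‖a − b‖ whenever ‖a − b‖ ≤ r. Let 0 < η ≤ r, let (m_{k+1})_{k≥0} be nonzero vectors in ℝ^d, and define x_{k+1} = x_k − η·m_{k+1}/‖m_{k+1}‖ and δ_k = m_{k+1} − ∇Φ(x_k). Then for every K ≥ 1: (1 − K₁η/2)·Σ_{k=0}^{K−1} ‖∇Φ(x_k)‖ ≤ (Φ(x₀)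 − Φ*)/η + K₀Kη/2 + 2·Σ_{k=0}^{K−1} ‖δ_k‖. -/
open Finset

lemma aux_descent {E : Type*} [NormedAddCommGroup E] [InnerProductSpace ℝ E] [CompleteSpace E]
    (Φ : E → ℝ) (hΦ : Differentiable ℝ Φ) (a v : E) (L : ℝ)
    (hL : ∀ t ∈ Set.Icc (0:ℝ) 1,
      (inner ℝ (gradient Φ (a + t • v) - gradient Φ a) v : ℝ) ≤ L * t * ‖v‖^2) :
    Φ (a + v) ≤ Φ a + (inner ℝ (gradient Φ a) v : ℝ) + L * ‖v‖^2 / 2 := by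
  set c : ℝ := (inner ℝ (gradient Φ a) v : ℝ) with hc
  set g : ℝ → ℝ := fun t => Φ (a + t • v) - t * c - L * ‖v‖^2 / 2 * t^2 with hgdef
  have hfd : ∀ y : E, (fderiv ℝ Φ y) v = (inner ℝ (gradient Φ y) v : ℝ) := by
    intro y
    rw [(hΦ y).hasGradientAt.hasFDerivAt.fderiv]
    simp [InnerProductSpace.toDual_apply_apply]
  have hg : ∀ t : ℝ, HasDerivAt g
      ((inner ℝ (gradient Φ (a + t • v)) v : ℝ) - c - L * ‖v‖^2 * t) t := by
    intro t
    have h1 : HasDerivAt (fun t : ℝ => a + t • v) v t := by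
      simpa using ((hasDerivAt_id t).smul_const v).const_add a
    have h2 : HasDerivAt (fun t : ℝ => Φ (a + t • v)) ((fderiv ℝ Φ (a + t • v)) v) t :=
      (hΦ (a + t • v)).hasFDerivAt.comp_hasDerivAt t h1
    rw [hfd] at h2
    have h3 : HasDerivAt (fun t : ℝ => t * c) c t := hasDerivAt_mul_const c
    have h4 : HasDerivAt (fun t : ℝ => L * ‖v‖^2 / 2 * t^2) (L * ‖v‖^2 / 2 * (2 * t)) t := by
      simpa using (hasDerivAt_pow 2 t).const_mul (L * ‖v‖^2 / 2)
    have := (h2.sub h3).sub h4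
    exact this.congr_deriv (by ring)
  have hanti : AntitoneOn g (Set.Icc 0 1) := by
    apply antitoneOn_of_deriv_nonpos (convex_Icc 0 1)
    · exact (fun t _ => ((hg t).differentiableAt).continuousAt.continuousWithinAt)
    · exact fun t ht => ((hg t).differentiableAt).differentiableWithinAt
    · intro t ht
      rw [interior_Icc] at ht
      rw [(hg t).deriv]
      have := hL t ⟨le_of_lt ht.1, le_of_lt ht.2⟩
      have h5 : (inner ℝ (gradient Φ (a + t • v) - gradient Φ a) v : ℝ)
          = (inner ℝ (gradient Φ (a + t • v)) v : ℝ) - c := by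
        rw [inner_sub_left]
      linarith [this, h5.symm.le]
  have h01 : g 1 ≤ g 0 := hanti (by norm_num) (by norm_num) zero_le_one
  simp only [hgdef, one_smul, zero_smul, add_zero] at h01
  nlinarith [h01]

theorem normalized_momentum_telescoped_descent
    {d : ℕ} (Φ : EuclideanSpace ℝ (Fin d) → ℝ) (hΦ : Differentiable ℝ Φ)
    (hbdd : BddBelow (Set.range Φ))
    (r K₀ K₁ : ℝ) (hr : 0 < r) (hK₀ : 0 ≤ K₀) (hK₁ : 0 ≤ K₁)
    (hsm : ∀ a b : EuclideanSpace ℝ (Fin d), ‖a - b‖ ≤ r →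
      ‖gradient Φ a - gradient Φ b‖ ≤ (K₀ + K₁ * ‖gradient Φ b‖) * ‖a - b‖)
    (η : ℝ) (hη : 0 < η) (hηr : η ≤ r)
    (x m : ℕ → EuclideanSpace ℝ (Fin d))
    (hm : ∀ k, m (k + 1) ≠ 0)
    (hx : ∀ k, x (k + 1) = x k - (η / ‖m (k + 1)‖) • m (k + 1))
    (K : ℕ) (hK : 1 ≤ K) :
    (1 - K₁ * η / 2) * ∑ k ∈ Finset.range K, ‖gradient Φ (x k)‖ ≤
      (Φ (x 0) - ⨅ z, Φ z) / η + K₀ * K * η / 2 +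
        2 * ∑ k ∈ Finset.range K, ‖m (k + 1) - gradient Φ (x k)‖ := by
  set g : ℕ → EuclideanSpace ℝ (Fin d) := fun k => gradient Φ (x k) with hgdef
  set δ : ℕ → ℝ := fun k => ‖m (k + 1) - gradient Φ (x k)‖ with hδdef
  -- per-step bound
  have key : ∀ k, Φ (x (k + 1)) ≤
      Φ (x k) - η * ‖g k‖ + 2 * η * δ k + (K₀ + K₁ * ‖g k‖) * η ^ 2 / 2 := by
    intro k
    set u := m (k + 1) with hu
    have hun : (0:ℝ) < ‖u‖ := norm_pos_iff.mpr (hm k)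
    set v : EuclideanSpace ℝ (Fin d) := -((η / ‖u‖) • u) with hv
    have hvn : ‖v‖ = η := by
      rw [hv, norm_neg, norm_smul, norm_div, Real.norm_eq_abs, abs_of_pos hη,
        Real.norm_eq_abs, abs_of_pos hun, div_mul_cancel₀ _ (ne_of_gt hun)]
    have hxk : x (k + 1) = x k + v := by
      rw [hx k, hv, sub_eq_add_neg]
    have hdesc := aux_descent Φ hΦ (x k) v (K₀ + K₁ * ‖g k‖) ?_
    · -- bound inner ℝ (g k) v
      have hinner : (inner ℝ (g k) v : ℝ) ≤ -(η * ‖g k‖) + 2 * η * δ k := by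
        have h1 : (inner ℝ (g k) v : ℝ) = -((η / ‖u‖) * inner ℝ (g k) u) := by
          rw [hv, inner_neg_right, real_inner_smul_right]
        have h2 : (inner ℝ (g k) u : ℝ) = ‖u‖ ^ 2 - inner ℝ (u - g k) u := by
          rw [inner_sub_left, real_inner_self_eq_norm_sq]; ring
        have h3 : (inner ℝ (u - g k) u : ℝ) ≤ δ k * ‖u‖ := by
          calc (inner ℝ (u - g k) u : ℝ) ≤ ‖u - g k‖ * ‖u‖ := real_inner_le_norm _ _
          _ = δ k * ‖u‖ := by rw [hδdef]
        have h4 : ‖g k‖ ≤ ‖u‖ + δ k := by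
          calc ‖g k‖ = ‖u - (u - g k)‖ := by congr 1; abel
          _ ≤ ‖u‖ + ‖u - g k‖ := norm_sub_le _ _
          _ = ‖u‖ + δ k := rfl
        have h5 : (η / ‖u‖) * ‖u‖ = η := div_mul_cancel₀ _ (ne_of_gt hun)
        have h6 : (0:ℝ) < η / ‖u‖ := div_pos hη hun
        have h7 : (inner ℝ (g k) u : ℝ) ≥ ‖u‖ ^ 2 - δ k * ‖u‖ := by rw [h2]; linarith
        have h8 : (η / ‖u‖) * (‖u‖ ^ 2 - δ k * ‖u‖) = η * ‖u‖ - η * δ k := by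
          field_simp
        have h9 : (inner ℝ (g k) v : ℝ) ≤ -(η * ‖u‖ - η * δ k) := by
          rw [h1]; rw [neg_le_neg_iff]
          calc η * ‖u‖ - η * δ k = (η / ‖u‖) * (‖u‖ ^ 2 - δ k * ‖u‖) := h8.symm
          _ ≤ (η / ‖u‖) * inner ℝ (g k) u := by
              apply mul_le_mul_of_nonneg_left (by linarith [h7]) (le_of_lt h6)
        have hδ0 : 0 ≤ δ k := norm_nonneg _
        nlinarith [h9, h4]
      rw [hxk]
      calc Φ (x k + v) ≤ Φ (x k) + (inner ℝ (g k) v : ℝ) + (K₀ + K₁ * ‖g k‖) * ‖v‖ ^ 2 / 2 :=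
            hdesc
        _ ≤ Φ (x k) - η * ‖g k‖ + 2 * η * δ k + (K₀ + K₁ * ‖g k‖) * η ^ 2 / 2 := by
            rw [hvn]; linarith [hinner]
    · -- smoothness condition along the segment
      intro t ht
      calc (inner ℝ (gradient Φ (x k + t • v) - gradient Φ (x k)) v : ℝ)
          ≤ ‖gradient Φ (x k + t • v) - gradient Φ (x k)‖ * ‖v‖ := real_inner_le_norm _ _
        _ ≤ ((K₀ + K₁ * ‖g k‖) * ‖(x k + t • v) - x k‖) * ‖v‖ := by
            apply mul_le_mul_of_nonneg_right _ (norm_nonneg v)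
            apply hsm
            rw [add_sub_cancel_left, norm_smul, Real.norm_eq_abs, abs_of_nonneg ht.1, hvn]
            calc t * η ≤ 1 * η := by nlinarith [ht.2, hη.le]
              _ ≤ r := by linarith
        _ = (K₀ + K₁ * ‖g k‖) * t * ‖v‖ ^ 2 := by
            rw [add_sub_cancel_left, norm_smul, Real.norm_eq_abs, abs_of_nonneg ht.1]
            ring
  -- telescoping
  have tele : ∀ n : ℕ, Φ (x n) ≤ Φ (x 0) +
      ∑ k ∈ Finset.range n, (-(η * ‖g k‖) + 2 * η * δ k + (K₀ + K₁ * ‖g k‖) * η ^ 2 / 2) := by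
    intro n
    induction n with
    | zero => simp
    | succ n ih =>
      rw [Finset.sum_range_succ]
      have := key n
      linarith
  set S := ∑ k ∈ Finset.range K, ‖g k‖ with hS
  set D := ∑ k ∈ Finset.range K, δ k with hD
  have hsum : ∑ k ∈ Finset.range K, (-(η * ‖g k‖) + 2 * η * δ k + (K₀ + K₁ * ‖g k‖) * η ^ 2 / 2)
      = (K₁ * η ^ 2 / 2 - η) * S + 2 * η * D + K * (K₀ * η ^ 2 / 2) := by
    have h1 : ∀ k ∈ Finset.range K, (-(η * ‖g k‖) + 2 * η * δ k + (K₀ + K₁ * ‖g k‖) * η ^ 2 / 2)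
        = (K₁ * η ^ 2 / 2 - η) * ‖g k‖ + 2 * η * δ k + K₀ * η ^ 2 / 2 := fun k _ => by ring
    rw [Finset.sum_congr rfl h1]
    simp [Finset.sum_add_distrib, ← Finset.mul_sum, Finset.sum_const, Finset.card_range,
      nsmul_eq_mul, hS, hD]
  have hinf : (⨅ z, Φ z) ≤ Φ (x K) := ciInf_le hbdd (x K)
  have hmain : Φ (x K) ≤ Φ (x 0) + ((K₁ * η ^ 2 / 2 - η) * S + 2 * η * D + K * (K₀ * η ^ 2 / 2)) := by
    rw [← hsum]; exact tele K
  have h2 : ((1 - K₁ * η / 2) * S - K₀ * K * η / 2 - 2 * D) * η ≤ Φ (x 0) - ⨅ z, Φ z := by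
    nlinarith [hmain, hinf]
  have h3 : (1 - K₁ * η / 2) * S - K₀ * K * η / 2 - 2 * D ≤ (Φ (x 0) - ⨅ z, Φ z) / η :=
    (le_div_iff₀ hη).mpr h2
  linarith
end

section
/- Let A : Ω → ℝ^{d_x} and B : Ω → L(ℝ^{d_y}, ℝ^{d_x}) (random linear maps) be independent square-integrable random variables on a probability space, with means a = E[A] and b = E[B], satisfying E‖A − a‖² ≤ σ_f² and E‖B − b‖² ≤ σ_g² (operator norm). Then for any fixed vectors z, z* ∈ ℝ^{d_y}: E‖(A − B z) − (a − b z)‖² ≤ σ_f² + 2σ_g²‖z*‖² + 2σ_g²‖z − z*‖². In particular, if ‖z*‖ ≤ M/μ then E‖(A − B z) − (a − b z)‖² ≤ σ_f² + 2M²σ_g²/μ² + 2σ_g²‖z − z*‖². -/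
open MeasureTheory

/-!
STATEMENT 12: Variance bound for the stochastic hypergradient estimator. If `A` (vector
valued) and `B` (operator valued) are independent square-integrable random variables with
means `a, b` and variances `E‖A − a‖² ≤ σ_f²`, `E‖B − b‖² ≤ σ_g²`, then for fixed `z, z*`:
`E‖(A − Bz) − (a − bz)‖² ≤ σ_f² + 2σ_g²‖z*‖² + 2σ_g²‖z − z*‖²`, and if moreover
`‖z*‖ ≤ M/μ`, then `E‖(A − Bz) − (a − bz)‖² ≤ σ_f² + 2M²σ_g²/μ² + 2σ_g²‖z − z*‖²`.
-/

lemma aux_int_norm_sq {α E : Type*} [MeasurableSpace α] {μ : Measure α}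
    [NormedAddCommGroup E] {f : α → E} (hf : MemLp f 2 μ) :
    Integrable (fun x => ‖f x‖ ^ 2) μ := by
  have h := hf.integrable_norm_rpow two_ne_zero ENNReal.ofNat_ne_top
  refine h.congr (Filter.Eventually.of_forall fun x => ?_)
  norm_num [Real.rpow_natCast]

lemma aux_integrable_inner {α E : Type*} [MeasurableSpace α] {μ : Measure α}
    [NormedAddCommGroup E] [InnerProductSpace ℝ E] {f g : α → E}
    (hf : MemLp f 2 μ) (hg : MemLp g 2 μ) :
    Integrable (fun x => (inner ℝ (f x) (g x) : ℝ)) μ := by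
  have h := MeasureTheory.L2.integrable_inner (𝕜 := ℝ) (hf.toLp f) (hg.toLp g)
  refine h.congr ?_
  filter_upwards [hf.coeFn_toLp, hg.coeFn_toLp] with x h1 h2
  rw [h1, h2]

set_option maxHeartbeats 1600000 in
theorem hypergradient_estimator_variance_bound
    {Ω : Type*} [MeasurableSpace Ω] (P : Measure Ω) [IsProbabilityMeasure P]
    {dx dy : ℕ}
    (A : Ω → EuclideanSpace ℝ (Fin dx))
    (B : Ω → (EuclideanSpace ℝ (Fin dy) →L[ℝ] EuclideanSpace ℝ (Fin dx)))
    (hindep : ProbabilityTheory.IndepFun A B P)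
    (hA2 : MemLp A 2 P) (hB2 : MemLp B 2 P)
    (σf σg M μ : ℝ) (hσf : 0 < σf) (hσg : 0 < σg) (hM : 0 < M) (hμ : 0 < μ)
    (hvarA : ∫ ω, ‖A ω - ∫ ω', A ω' ∂P‖ ^ 2 ∂P ≤ σf ^ 2)
    (hvarB : ∫ ω, ‖B ω - ∫ ω', B ω' ∂P‖ ^ 2 ∂P ≤ σg ^ 2)
    (z zstar : EuclideanSpace ℝ (Fin dy)) :
    (∫ ω, ‖(A ω - B ω z) - ((∫ ω', A ω' ∂P) - (∫ ω', B ω' ∂P) z)‖ ^ 2 ∂P ≤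
      σf ^ 2 + 2 * σg ^ 2 * ‖zstar‖ ^ 2 + 2 * σg ^ 2 * ‖z - zstar‖ ^ 2) ∧
    (‖zstar‖ ≤ M / μ →
      ∫ ω, ‖(A ω - B ω z) - ((∫ ω', A ω' ∂P) - (∫ ω', B ω' ∂P) z)‖ ^ 2 ∂P ≤
        σf ^ 2 + 2 * M ^ 2 * σg ^ 2 / μ ^ 2 + 2 * σg ^ 2 * ‖z - zstar‖ ^ 2) := by
  set a := ∫ ω', A ω' ∂P with ha
  set b := ∫ ω', B ω' ∂P with hb
  set X : Ω → EuclideanSpace ℝ (Fin dx) := fun ω => A ω - a with hXdef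
  set Y : Ω → EuclideanSpace ℝ (Fin dx) := fun ω => (B ω - b) z with hYdef
  have hXmem : MemLp X 2 P := hA2.sub (memLp_const a)
  have hBb : MemLp (fun ω => B ω - b) 2 P := hB2.sub (memLp_const b)
  have hYasm : AEStronglyMeasurable Y P := by
    have hc : Continuous
        (fun L : EuclideanSpace ℝ (Fin dy) →L[ℝ] EuclideanSpace ℝ (Fin dx) => (L - b) z) :=
      ((ContinuousLinearMap.apply ℝ (EuclideanSpace ℝ (Fin dx)) z).continuous).comp
        (continuous_id.sub continuous_const)
    exact hc.comp_aestronglyMeasurable hB2.aestronglyMeasurable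
  have hYmem : MemLp Y 2 P :=
    hBb.of_le_mul hYasm (Filter.Eventually.of_forall fun ω => by
      have h := (B ω - b).le_opNorm z; rw [mul_comm] at h; exact h)
  have hrw : ∀ ω, (A ω - B ω z) - (a - b z) = X ω - Y ω := by
    intro ω
    simp only [hXdef, hYdef, ContinuousLinearMap.sub_apply]
    abel
  simp only [hrw]
  -- integrabilities
  have intX2 : Integrable (fun ω => ‖X ω‖ ^ 2) P := aux_int_norm_sq hXmem
  have intY2 : Integrable (fun ω => ‖Y ω‖ ^ 2) P := aux_int_norm_sq hYmem
  have intB2 : Integrable (fun ω => ‖B ω - b‖ ^ 2) P := aux_int_norm_sq hBb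
  have intXY : Integrable (fun ω => (inner ℝ (X ω) (Y ω) : ℝ)) P :=
    aux_integrable_inner hXmem hYmem
  -- cross term is zero
  have hAint : Integrable A P := hA2.integrable one_le_two
  have hXint : Integrable X P := hXmem.integrable one_le_two
  have hYint : Integrable Y P := hYmem.integrable one_le_two
  have hXmean : ∫ ω, X ω ∂P = 0 := by
    have h1 : ∫ ω, X ω ∂P = (∫ ω, A ω ∂P) - a := by
      rw [integral_sub hAint (integrable_const a), integral_const]; simp
    rw [h1, ← ha, sub_self]
  have hcross : ∫ ω, (inner ℝ (X ω) (Y ω) : ℝ) ∂P = 0 := by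
    have hxy : ∀ ω, (inner ℝ (X ω) (Y ω) : ℝ) = ∑ i, X ω i * Y ω i := by
      intro ω
      simp [PiLp.inner_apply, RCLike.inner_apply, conj_trivial, mul_comm]
    simp_rw [hxy]
    have hXi : ∀ i, Integrable (fun ω => X ω i) P := fun i =>
      ((EuclideanSpace.proj (𝕜 := ℝ) i).comp_memLp' hXmem).integrable one_le_two
    have hYi : ∀ i, Integrable (fun ω => Y ω i) P := fun i =>
      ((EuclideanSpace.proj (𝕜 := ℝ) i).comp_memLp' hYmem).integrable one_le_two
    have hindepi : ∀ i : Fin dx,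
        ProbabilityTheory.IndepFun (fun ω => X ω i) (fun ω => Y ω i) P := by
      intro i
      have mφ : Measurable (fun v : EuclideanSpace ℝ (Fin dx) => (v - a) i) := by
        have : Continuous (fun v : EuclideanSpace ℝ (Fin dx) => (v - a) i) :=
          (EuclideanSpace.proj (𝕜 := ℝ) i).continuous.comp
            (continuous_id.sub continuous_const)
        exact this.measurable
      have mψ : Measurable
          (fun L : EuclideanSpace ℝ (Fin dy) →L[ℝ] EuclideanSpace ℝ (Fin dx) =>
            ((L - b) z) i) := by
        have : Continuous
            (fun L : EuclideanSpace ℝ (Fin dy) →L[ℝ] EuclideanSpace ℝ (Fin dx) =>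
              ((L - b) z) i) :=
          (EuclideanSpace.proj (𝕜 := ℝ) i).continuous.comp
            (((ContinuousLinearMap.apply ℝ (EuclideanSpace ℝ (Fin dx)) z).continuous).comp
              (continuous_id.sub continuous_const))
        exact this.measurable
      exact hindep.comp mφ mψ
    have hterm : ∀ i : Fin dx, ∫ ω, X ω i * Y ω i ∂P = 0 := by
      intro i
      have := (hindepi i).integral_mul_eq_mul_integral (hXi i).aestronglyMeasurable (hYi i).aestronglyMeasurable
      have hmul : ∫ ω, X ω i * Y ω i ∂P = (∫ ω, X ω i ∂P) * ∫ ω, Y ω i ∂P := this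
      have hXi0 : ∫ ω, X ω i ∂P = 0 := by
        have := (EuclideanSpace.proj (𝕜 := ℝ) i).integral_comp_comm hXint
        simpa [hXmean] using this
      rw [hmul, hXi0, zero_mul]
    have hint_i : ∀ i ∈ Finset.univ, Integrable (fun ω => X ω i * Y ω i) P := fun i _ =>
      (hindepi i).integrable_mul (hXi i) (hYi i)
    rw [integral_finset_sum _ hint_i]
    simp [hterm]
  -- split the integral
  have hsplit : ∫ ω, ‖X ω - Y ω‖ ^ 2 ∂P
      = (∫ ω, ‖X ω‖ ^ 2 ∂P) + ∫ ω, ‖Y ω‖ ^ 2 ∂P := by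
    have hpt : ∀ ω, ‖X ω - Y ω‖ ^ 2
        = (‖X ω‖ ^ 2 - 2 * (inner ℝ (X ω) (Y ω) : ℝ)) + ‖Y ω‖ ^ 2 := fun ω =>
      norm_sub_sq_real (X ω) (Y ω)
    simp_rw [hpt]
    have i2 : Integrable (fun ω => 2 * (inner ℝ (X ω) (Y ω) : ℝ)) P := intXY.const_mul 2
    have i1 : Integrable (fun ω => ‖X ω‖ ^ 2 - 2 * (inner ℝ (X ω) (Y ω) : ℝ)) P := intX2.sub i2
    rw [integral_add i1 intY2, integral_sub intX2 i2, integral_const_mul, hcross]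
    ring
  -- bound the Y part
  have hYle : ∫ ω, ‖Y ω‖ ^ 2 ∂P ≤ σg ^ 2 * ‖z‖ ^ 2 := by
    have hpt : ∀ ω, ‖Y ω‖ ^ 2 ≤ ‖B ω - b‖ ^ 2 * ‖z‖ ^ 2 := by
      intro ω
      have h := (B ω - b).le_opNorm z
      have h0 : (0:ℝ) ≤ ‖Y ω‖ := norm_nonneg _
      nlinarith [norm_nonneg (B ω - b), norm_nonneg z]
    calc ∫ ω, ‖Y ω‖ ^ 2 ∂P ≤ ∫ ω, ‖B ω - b‖ ^ 2 * ‖z‖ ^ 2 ∂P :=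
          integral_mono intY2 (intB2.mul_const _) hpt
      _ = (∫ ω, ‖B ω - b‖ ^ 2 ∂P) * ‖z‖ ^ 2 := integral_mul_const _ _
      _ ≤ σg ^ 2 * ‖z‖ ^ 2 :=
          mul_le_mul_of_nonneg_right hvarB (sq_nonneg _)
  have hz : ‖z‖ ^ 2 ≤ 2 * ‖zstar‖ ^ 2 + 2 * ‖z - zstar‖ ^ 2 := by
    have h1 : ‖z‖ ≤ ‖zstar‖ + ‖z - zstar‖ := by
      calc ‖z‖ = ‖zstar + (z - zstar)‖ := by rw [add_sub_cancel]
        _ ≤ ‖zstar‖ + ‖z - zstar‖ := norm_add_le _ _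
    have h2 : ‖z‖ ^ 2 ≤ (‖zstar‖ + ‖z - zstar‖) ^ 2 := by
      have := norm_nonneg z
      nlinarith
    nlinarith [h2, sq_nonneg (‖zstar‖ - ‖z - zstar‖)]
  have hmain : ∫ ω, ‖X ω - Y ω‖ ^ 2 ∂P ≤
      σf ^ 2 + 2 * σg ^ 2 * ‖zstar‖ ^ 2 + 2 * σg ^ 2 * ‖z - zstar‖ ^ 2 := by
    rw [hsplit]
    have hvX : ∫ ω, ‖X ω‖ ^ 2 ∂P ≤ σf ^ 2 := by
      simp only [hXdef]; exact hvarA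
    have h3 : σg ^ 2 * ‖z‖ ^ 2 ≤ σg ^ 2 * (2 * ‖zstar‖ ^ 2 + 2 * ‖z - zstar‖ ^ 2) :=
      mul_le_mul_of_nonneg_left hz (sq_nonneg σg)
    nlinarith [hvX, hYle, h3]
  refine ⟨hmain, fun hzs => ?_⟩
  have h2 : 2 * σg ^ 2 * ‖zstar‖ ^ 2 ≤ 2 * M ^ 2 * σg ^ 2 / μ ^ 2 := by
    have hz2 : ‖zstar‖ ^ 2 ≤ (M / μ) ^ 2 := by
      have := norm_nonneg zstar
      nlinarith
    rw [div_pow] at hz2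
    have h4 : 2 * σg ^ 2 * ‖zstar‖ ^ 2 ≤ 2 * σg ^ 2 * (M ^ 2 / μ ^ 2) :=
      mul_le_mul_of_nonneg_left hz2 (by positivity)
    calc 2 * σg ^ 2 * ‖zstar‖ ^ 2 ≤ 2 * σg ^ 2 * (M ^ 2 / μ ^ 2) := h4
      _ = 2 * M ^ 2 * σg ^ 2 / μ ^ 2 := by ring
  linarith
end

section
/- Let g : ℝ^d → ℝ be convex, differentiable, and L-smooth (‖∇g(y) − ∇g(y')‖ ≤ L‖y − y'‖ for all y, y'). Let B ⊆ ℝ^d be a nonempty closed ball (or closed convex set), let y ∈ B, let v ∈ ℝ^d, let 0 < α ≤ 1/(2L), and set y⁺ = Π_B(y − αv), the Euclidean projection of y − αv onto B. Then for any y* ∈ B: α·(g(y⁺) − g(y*)) ≤ ½‖y − y*‖² − ½‖y⁺ − y*‖² + 2α²‖v − ∇g(y)‖² + α·⟨v − ∇g(y), y* − y⟩. -/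
open scoped RealInnerProductSpace

/-!
STATEMENT 13: One-step inequality for projected gradient descent. If `g` is convex,
differentiable and `L`-smooth, `B` is a nonempty closed convex set, `y ∈ B`, `0 < α ≤ 1/(2L)`,
and `y⁺` is the Euclidean projection of `y − αv` onto `B`, then for any `y* ∈ B`:
`α(g(y⁺) − g(y*)) ≤ ½‖y − y*‖² − ½‖y⁺ − y*‖² + 2α²‖v − ∇g(y)‖² + α⟨v − ∇g(y), y* − y⟩`.
-/

variable {d : ℕ}

local notation "E" => EuclideanSpace ℝ (Fin d)

lemma line_hasDerivAt (g : E → ℝ) (hdiff : Differentiable ℝ g) (a b : E) (t : ℝ) :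
    HasDerivAt (fun s : ℝ => g (a + s • (b - a)))
      ⟪gradient g (a + t • (b - a)), b - a⟫ t := by
  have hl : HasDerivAt (fun s : ℝ => a + s • (b - a)) (b - a) t := by
    simpa using ((hasDerivAt_id t).smul_const (b - a)).const_add a
  have hg := (hdiff (a + t • (b - a))).hasGradientAt.hasFDerivAt
  simpa [InnerProductSpace.toDual_apply_apply, Function.comp_def] using hg.comp_hasDerivAt t hl

lemma convex_grad_le (g : E → ℝ) (hconv : ConvexOn ℝ Set.univ g)
    (hdiff : Differentiable ℝ g) (a b : E) :
    ⟪gradient g a, b - a⟫ ≤ g b - g a := by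
  set φ : ℝ → ℝ := fun s => g (a + s • (b - a)) with hφ
  have hφconv : ConvexOn ℝ Set.univ φ := by
    have := hconv.comp_affineMap (AffineMap.lineMap a b : ℝ →ᵃ[ℝ] E)
    have heq : (g ∘ (AffineMap.lineMap a b : ℝ →ᵃ[ℝ] E)) = φ := by
      funext t
      simp [φ, AffineMap.lineMap_apply, add_comm, vsub_eq_sub, vadd_eq_add]
    simpa [heq] using this
  have hd := line_hasDerivAt g hdiff a b 0
  have hslope := hφconv.le_slope_of_hasDerivAt (Set.mem_univ 0) (Set.mem_univ 1) one_pos hd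
  have : slope φ 0 1 = φ 1 - φ 0 := by simp [slope_def_field]
  rw [this] at hslope
  simpa [φ] using hslope

lemma descent_lemma (g : E → ℝ) (L : ℝ) (hL : 0 ≤ L)
    (hdiff : Differentiable ℝ g)
    (hsmooth : ∀ a b : E, ‖gradient g a - gradient g b‖ ≤ L * ‖a - b‖) (a b : E) :
    g b ≤ g a + ⟪gradient g a, b - a⟫ + L / 2 * ‖b - a‖ ^ 2 := by
  set φ : ℝ → ℝ := fun s => g (a + s • (b - a)) with hφ
  set ψ : ℝ → ℝ := fun t => ⟪gradient g (a + t • (b - a)), b - a⟫ with hψ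
  have hgradcont : Continuous (gradient g) := by
    have : LipschitzWith L.toNNReal (gradient g) := by
      apply LipschitzWith.of_dist_le_mul
      intro p q
      simpa [dist_eq_norm, Real.coe_toNNReal L hL] using hsmooth p q
    exact this.continuous
  have hψcont : Continuous ψ := by
    apply Continuous.inner
    · exact hgradcont.comp (by continuity)
    · exact continuous_const
  have hint : ∫ t in (0:ℝ)..1, ψ t = φ 1 - φ 0 :=
    intervalIntegral.integral_eq_sub_of_hasDerivAt
      (fun t _ => line_hasDerivAt g hdiff a b t)
      (hψcont.intervalIntegrable 0 1)
  have hbound : ∀ t ∈ Set.Icc (0:ℝ) 1, ψ t ≤ ψ 0 + t * (L * ‖b - a‖ ^ 2) := by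
    intro t ht
    have h1 : ψ t - ψ 0 = ⟪gradient g (a + t • (b - a)) - gradient g (a + (0:ℝ) • (b - a)),
        b - a⟫ := by simp [ψ, inner_sub_left]
    have h2 : ⟪gradient g (a + t • (b - a)) - gradient g (a + (0:ℝ) • (b - a)), b - a⟫ ≤
        ‖gradient g (a + t • (b - a)) - gradient g (a + (0:ℝ) • (b - a))‖ * ‖b - a‖ :=
      real_inner_le_norm _ _
    have h3 : ‖gradient g (a + t • (b - a)) - gradient g (a + (0:ℝ) • (b - a))‖ ≤
        L * (t * ‖b - a‖) := by
      have := hsmooth (a + t • (b - a)) (a + (0:ℝ) • (b - a))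
      have heq : ‖(a + t • (b - a)) - (a + (0:ℝ) • (b - a))‖ = t * ‖b - a‖ := by
        have : (a + t • (b - a)) - (a + (0:ℝ) • (b - a)) = t • (b - a) := by
          module
        rw [this, norm_smul]
        simp [abs_of_nonneg ht.1]
      rw [heq] at this
      exact this
    nlinarith [norm_nonneg (b - a), mul_le_mul_of_nonneg_right h3 (norm_nonneg (b - a))]
  have hintle : ∫ t in (0:ℝ)..1, ψ t ≤ ∫ t in (0:ℝ)..1, (ψ 0 + t * (L * ‖b - a‖ ^ 2)) := by
    apply intervalIntegral.integral_mono_on zero_le_one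
      (hψcont.intervalIntegrable 0 1)
      ((continuous_const.add (continuous_id.mul continuous_const)).intervalIntegrable 0 1)
    exact hbound
  have hrhs : ∫ t in (0:ℝ)..1, (ψ 0 + t * (L * ‖b - a‖ ^ 2)) =
      ψ 0 + L / 2 * ‖b - a‖ ^ 2 := by
    rw [intervalIntegral.integral_add (intervalIntegrable_const)
      (intervalIntegral.intervalIntegrable_id.mul_const _)]
    simp [intervalIntegral.integral_mul_const, integral_id]
    ring
  rw [hint, hrhs] at hintle
  have hφ0 : φ 0 = g a := by simp [φ]
  have hφ1 : φ 1 = g b := by simp [φ]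
  have hψ0 : ψ 0 = ⟪gradient g a, b - a⟫ := by simp [ψ]
  rw [hφ0, hφ1, hψ0] at hintle
  linarith

set_option maxHeartbeats 1000000 in
theorem projected_gradient_one_step
    {d : ℕ} (g : EuclideanSpace ℝ (Fin d) → ℝ) (L : ℝ)
    (hconv : ConvexOn ℝ Set.univ g) (hdiff : Differentiable ℝ g)
    (hsmooth : ∀ a b : EuclideanSpace ℝ (Fin d),
      ‖gradient g a - gradient g b‖ ≤ L * ‖a - b‖)
    (B : Set (EuclideanSpace ℝ (Fin d))) (hBconv : Convex ℝ B) (hBclosed : IsClosed B)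
    (y : EuclideanSpace ℝ (Fin d)) (hy : y ∈ B)
    (v : EuclideanSpace ℝ (Fin d))
    (α : ℝ) (hα0 : 0 < α) (hα : α ≤ 1 / (2 * L))
    (yplus : EuclideanSpace ℝ (Fin d))
    -- `yplus` is the Euclidean (metric) projection of `y − α•v` onto `B`:
    (hplusmem : yplus ∈ B)
    (hproj : ∀ w ∈ B, ‖y - α • v - yplus‖ ≤ ‖y - α • v - w‖) :
    ∀ ystar ∈ B,
      α * (g yplus - g ystar) ≤
        1 / 2 * ‖y - ystar‖ ^ 2 - 1 / 2 * ‖yplus - ystar‖ ^ 2 +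
          2 * α ^ 2 * ‖v - gradient g y‖ ^ 2 +
          α * ⟪v - gradient g y, ystar - y⟫ := by
  intro ystar hstar
  haveI : Nonempty B := ⟨⟨yplus, hplusmem⟩⟩
  have hL : 0 < L := by
    by_contra h
    push_neg at h
    have : 1 / (2 * L) ≤ 0 := one_div_nonpos.mpr (by linarith)
    linarith
  have hαL : α * L ≤ 1 / 2 := by
    rw [le_div_iff₀ (by positivity)] at hα
    nlinarith
  -- descent lemma and convexity
  have hdesc := descent_lemma g L hL.le hdiff hsmooth y yplus
  have hconv1 := convex_grad_le g hconv hdiff y ystar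
  -- projection inequality
  have hbdd : BddBelow (Set.range fun w : B => ‖y - α • v - (w : EuclideanSpace ℝ (Fin d))‖) :=
    ⟨0, by rintro r ⟨w, rfl⟩; exact norm_nonneg _⟩
  have hiInf : ‖y - α • v - yplus‖ = ⨅ w : B, ‖y - α • v - (w : EuclideanSpace ℝ (Fin d))‖ :=
    le_antisymm (le_ciInf fun w => hproj w w.2) (ciInf_le hbdd ⟨yplus, hplusmem⟩)
  have hP : ⟪y - α • v - yplus, ystar - yplus⟫ ≤ 0 :=
    ((norm_eq_iInf_iff_real_inner_le_zero hBconv hplusmem).mp hiInf) ystar hstar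
  have hPexp : ⟪y - yplus, ystar - yplus⟫ - α * ⟪v, ystar - yplus⟫ ≤ 0 := by
    have he : y - α • v - yplus = (y - yplus) - α • v := by module
    rw [he, inner_sub_left, real_inner_smul_left] at hP
    linarith
  -- norm identity
  have hident : ‖y - ystar‖ ^ 2 =
      ‖y - yplus‖ ^ 2 + 2 * ⟪y - yplus, yplus - ystar⟫ + ‖yplus - ystar‖ ^ 2 := by
    have h := norm_add_sq_real (y - yplus) (yplus - ystar)
    have he : (y - yplus) + (yplus - ystar) = y - ystar := by module
    rw [he] at h
    linarith
  have hneg : ⟪y - yplus, yplus - ystar⟫ = -⟪y - yplus, ystar - yplus⟫ := by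
    simp only [inner_sub_left, inner_sub_right]; ring
  -- bilinear decomposition
  have hR1 : ⟪v, ystar - yplus⟫ =
      ⟪gradient g y, ystar - y⟫ + ⟪v - gradient g y, ystar - y⟫ -
        ⟪gradient g y, yplus - y⟫ + ⟪v - gradient g y, y - yplus⟫ := by
    simp only [inner_sub_left, inner_sub_right]; ring
  -- Cauchy-Schwarz
  have hCS : ⟪v - gradient g y, y - yplus⟫ ≤ ‖v - gradient g y‖ * ‖y - yplus‖ :=
    real_inner_le_norm _ _
  have hnorm : ‖yplus - y‖ = ‖y - yplus‖ := norm_sub_rev _ _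
  rw [hnorm] at hdesc
  -- AM-GM
  have hAM : α * (‖v - gradient g y‖ * ‖y - yplus‖) ≤
      2 * α ^ 2 * ‖v - gradient g y‖ ^ 2 + ‖y - yplus‖ ^ 2 / 8 := by
    nlinarith [sq_nonneg (4 * α * ‖v - gradient g y‖ - ‖y - yplus‖)]
  have hCS' : α * ⟪v - gradient g y, y - yplus⟫ ≤
      2 * α ^ 2 * ‖v - gradient g y‖ ^ 2 + ‖y - yplus‖ ^ 2 / 8 :=
    le_trans (mul_le_mul_of_nonneg_left hCS hα0.le) hAM
  have hL3 : α * L / 2 * ‖y - yplus‖ ^ 2 ≤ 1 / 4 * ‖y - yplus‖ ^ 2 := by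
    nlinarith [sq_nonneg ‖y - yplus‖]
  nlinarith [mul_le_mul_of_nonneg_left hconv1 hα0.le,
    mul_le_mul_of_nonneg_left hPexp hα0.le, sq_nonneg ‖y - yplus‖,
    mul_le_mul_of_nonneg_left hdesc hα0.le]
end

section
/- Let Φ : ℝ^d → ℝ be differentiable, let β ∈ (0, 1), η > 0, K₀, K₁ ≥ 0, K ≥ 1, and let (x_k)_{k=0}^{K}, (m_k)_{k=0}^{K}, (ĝ_k)_{k=0}^{K−1} be sequences in ℝ^d with m_{k+1} = β m_k + (1 − β) ĝ_k for 0 ≤ k ≤ K−1, and suppose ‖∇Φ(x_k) − ∇Φ(x_{k+1})‖ ≤ (K₀ + K₁‖∇Φ(x_k)‖)·η for all 0 ≤ k ≤ K−1. Define δ_k = m_{k+1} − ∇Φ(x_k) and δ̂_i = ĝ_i − ∇Φ(x_i). Then Σ_{k=0}^{K−1} ‖δ_k‖ ≤ (1 − β)·Σ_{k=0}^{K−1} ‖Σ_{i=0}^{k} β^{k−i} δ̂_i‖ + K₀Kηβ/(1 − β) + (K₁ηβ/(1 − β))·Σ_{k=0}^{K−1} ‖∇Φ(x_k)‖ + (β/(1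 − β))·‖m₀ − ∇Φ(x₀)‖. -/
/-!
STATEMENT 16: Deterministic decomposition of the momentum estimation error. With
`m_{k+1} = β m_k + (1 − β) ĝ_k`, `δ_k = m_{k+1} − ∇Φ(x_k)`, `δ̂_i = ĝ_i − ∇Φ(x_i)`, and
`‖∇Φ(x_k) − ∇Φ(x_{k+1})‖ ≤ (K₀ + K₁‖∇Φ(x_k)‖)·η` for `0 ≤ k ≤ K−1`:
`Σ_{k<K} ‖δ_k‖ ≤ (1 − β)·Σ_{k<K} ‖Σ_{i≤k} β^{k−i} δ̂_i‖ + K₀Kηβ/(1−β)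
  + (K₁ηβ/(1−β))·Σ_{k<K} ‖∇Φ(x_k)‖ + (β/(1−β))·‖m₀ − ∇Φ(x₀)‖`.
-/

section aux
variable {E : Type*} [NormedAddCommGroup E] [NormedSpace ℝ E]

lemma mom_unroll (β : ℝ) (K : ℕ) (m g G : ℕ → E)
    (hm : ∀ k < K, m (k + 1) = β • m k + (1 - β) • g k) :
    ∀ k < K, m (k + 1) - G k =
      β ^ (k + 1) • (m 0 - G 0)
      + (1 - β) • (∑ i ∈ Finset.range (k + 1), β ^ (k - i) • (g i - G i))
      + ∑ j ∈ Finset.range k, β ^ (k - j) • (G j - G (j + 1)) := by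
  intro k
  induction k with
  | zero =>
    intro hk
    rw [hm 0 hk]
    simp
    module
  | succ k ih =>
    intro hk
    have hk' : k < K := by omega
    have hmk : m (k + 1) = (β ^ (k + 1) • (m 0 - G 0)
      + (1 - β) • (∑ i ∈ Finset.range (k + 1), β ^ (k - i) • (g i - G i))
      + ∑ j ∈ Finset.range k, β ^ (k - j) • (G j - G (j + 1))) + G k :=
      eq_add_of_sub_eq (ih hk')
    rw [hm (k + 1) hk, hmk,
      Finset.sum_range_succ (f := fun i => β ^ (k + 1 - i) • (g i - G i)),
      Finset.sum_range_succ (f := fun j => β ^ (k + 1 - j) • (G j - G (j + 1)))]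
    have e1 : ∑ i ∈ Finset.range (k + 1), β ^ (k + 1 - i) • (g i - G i)
        = β • ∑ i ∈ Finset.range (k + 1), β ^ (k - i) • (g i - G i) := by
      rw [Finset.smul_sum]
      refine Finset.sum_congr rfl fun i hi => ?_
      rw [Finset.mem_range] at hi
      have h' : k + 1 - i = (k - i) + 1 := by omega
      rw [h', pow_succ', mul_smul]
    have e2 : ∑ j ∈ Finset.range k, β ^ (k + 1 - j) • (G j - G (j + 1))
        = β • ∑ j ∈ Finset.range k, β ^ (k - j) • (G j - G (j + 1)) := by
      rw [Finset.smul_sum]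
      refine Finset.sum_congr rfl fun j hj => ?_
      rw [Finset.mem_range] at hj
      have h' : k + 1 - j = (k - j) + 1 := by omega
      rw [h', pow_succ', mul_smul]
    rw [e1, e2]
    simp only [Nat.sub_self, Nat.add_sub_cancel_left, Nat.succ_sub_succ]
    module

lemma geom_sum_le_aux {β : ℝ} (h0 : 0 < β) (h1 : β < 1) (n : ℕ) :
    ∑ i ∈ Finset.range n, β ^ i ≤ 1 / (1 - β) := by
  rw [geom_sum_eq (by linarith) n]
  have h : (β ^ n - 1) / (β - 1) = (1 - β ^ n) / (1 - β) := by
    rw [← neg_div_neg_eq]; ring_nf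
  rw [h]
  have hb : (0:ℝ) < 1 - β := by linarith
  have hp : (0:ℝ) ≤ β ^ n := pow_nonneg h0.le n
  gcongr
  linarith

end aux

theorem momentum_error_decomposition
    {d : ℕ} (Φ : EuclideanSpace ℝ (Fin d) → ℝ) (hΦ : Differentiable ℝ Φ)
    (β η K₀ K₁ : ℝ) (hβ : β ∈ Set.Ioo (0 : ℝ) 1) (hη : 0 < η)
    (hK₀ : 0 ≤ K₀) (hK₁ : 0 ≤ K₁)
    (K : ℕ) (hK : 1 ≤ K)
    (x m ghat : ℕ → EuclideanSpace ℝ (Fin d))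
    (hm : ∀ k < K, m (k + 1) = β • m k + (1 - β) • ghat k)
    (hsm : ∀ k < K, ‖gradient Φ (x k) - gradient Φ (x (k + 1))‖ ≤
      (K₀ + K₁ * ‖gradient Φ (x k)‖) * η) :
    ∑ k ∈ Finset.range K, ‖m (k + 1) - gradient Φ (x k)‖ ≤
      (1 - β) * ∑ k ∈ Finset.range K,
          ‖∑ i ∈ Finset.range (k + 1), β ^ (k - i) • (ghat i - gradient Φ (x i))‖ +
        K₀ * K * η * β / (1 - β) +
        K₁ * η * β / (1 - β) * ∑ k ∈ Finset.range K, ‖gradient Φ (x k)‖ +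
        β / (1 - β) * ‖m 0 - gradient Φ (x 0)‖ := by
  obtain ⟨hβ0, hβ1⟩ := hβ
  have h1β : (0:ℝ) < 1 - β := by linarith
  set G : ℕ → EuclideanSpace ℝ (Fin d) := fun k => gradient Φ (x k) with hG
  set A : ℝ := ‖m 0 - G 0‖ with hA
  have hA0 : 0 ≤ A := norm_nonneg _
  have hunroll := mom_unroll β K m ghat G hm
  -- pointwise bound
  have hpt : ∀ k ∈ Finset.range K, ‖m (k + 1) - G k‖ ≤
      β ^ (k + 1) * A +
      (1 - β) * ‖∑ i ∈ Finset.range (k + 1), β ^ (k - i) • (ghat i - G i)‖ +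
      ∑ j ∈ Finset.range k, β ^ (k - j) * ‖G j - G (j + 1)‖ := by
    intro k hk
    rw [Finset.mem_range] at hk
    rw [hunroll k hk]
    refine (norm_add₃_le).trans ?_
    rw [norm_smul, norm_smul, Real.norm_eq_abs, Real.norm_eq_abs,
      abs_of_pos (pow_pos hβ0 _), abs_of_pos h1β]
    gcongr
    refine (norm_sum_le _ _).trans (le_of_eq ?_)
    refine Finset.sum_congr rfl fun j hj => ?_
    rw [norm_smul, Real.norm_eq_abs, abs_of_pos (pow_pos hβ0 _)]
  refine (Finset.sum_le_sum hpt).trans ?_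
  rw [Finset.sum_add_distrib, Finset.sum_add_distrib]
  have hT1 : ∑ k ∈ Finset.range K, β ^ (k + 1) * A ≤ β / (1 - β) * A := by
    calc ∑ k ∈ Finset.range K, β ^ (k + 1) * A
        = (β * ∑ k ∈ Finset.range K, β ^ k) * A := by
          rw [Finset.mul_sum, ← Finset.sum_mul]
          congr 1
          exact Finset.sum_congr rfl fun k _ => pow_succ' β k
      _ ≤ (β * (1 / (1 - β))) * A := by
          gcongr
          exact geom_sum_le_aux hβ0 hβ1 K
      _ = β / (1 - β) * A := by ring
  have hT2 : ∑ k ∈ Finset.range K,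
      (1 - β) * ‖∑ i ∈ Finset.range (k + 1), β ^ (k - i) • (ghat i - G i)‖
      = (1 - β) * ∑ k ∈ Finset.range K,
          ‖∑ i ∈ Finset.range (k + 1), β ^ (k - i) • (ghat i - G i)‖ :=
    (Finset.mul_sum _ _ _).symm
  have hinner : ∀ j, ∑ k ∈ Finset.Ico (j + 1) K, β ^ (k - j) ≤ β / (1 - β) := by
    intro j
    rw [Finset.sum_Ico_eq_sum_range]
    have he : ∀ t ∈ Finset.range (K - (j + 1)), β ^ (j + 1 + t - j) = β * β ^ t := by
      intro t _
      have h' : j + 1 + t - j = t + 1 := by omega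
      rw [h', pow_succ']
    rw [Finset.sum_congr rfl he, ← Finset.mul_sum]
    calc β * ∑ t ∈ Finset.range (K - (j + 1)), β ^ t ≤ β * (1 / (1 - β)) := by
          gcongr
          exact geom_sum_le_aux hβ0 hβ1 _
      _ = β / (1 - β) := by ring
  have hT3 : ∑ k ∈ Finset.range K, ∑ j ∈ Finset.range k, β ^ (k - j) * ‖G j - G (j + 1)‖
      ≤ K₀ * K * η * β / (1 - β) +
        K₁ * η * β / (1 - β) * ∑ k ∈ Finset.range K, ‖G k‖ := by
    have hswap : ∑ k ∈ Finset.range K, ∑ j ∈ Finset.range k, β ^ (k - j) * ‖G j - G (j + 1)‖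
        = ∑ j ∈ Finset.range K, ∑ k ∈ Finset.Ico (j + 1) K, β ^ (k - j) * ‖G j - G (j + 1)‖ := by
      simpa [← Finset.range_eq_Ico] using
        (Finset.sum_Ico_Ico_comm' 0 K (fun i j => β ^ (j - i) * ‖G i - G (i + 1)‖)).symm
    rw [hswap]
    calc ∑ j ∈ Finset.range K, ∑ k ∈ Finset.Ico (j + 1) K, β ^ (k - j) * ‖G j - G (j + 1)‖
        = ∑ j ∈ Finset.range K, (∑ k ∈ Finset.Ico (j + 1) K, β ^ (k - j)) * ‖G j - G (j + 1)‖ := by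
          exact Finset.sum_congr rfl fun j _ => (Finset.sum_mul _ _ _).symm
      _ ≤ ∑ j ∈ Finset.range K, (β / (1 - β)) * ((K₀ + K₁ * ‖G j‖) * η) := by
          refine Finset.sum_le_sum fun j hj => ?_
          rw [Finset.mem_range] at hj
          have hb : 0 ≤ β / (1 - β) := by positivity
          calc (∑ k ∈ Finset.Ico (j + 1) K, β ^ (k - j)) * ‖G j - G (j + 1)‖
              ≤ (β / (1 - β)) * ‖G j - G (j + 1)‖ :=
                mul_le_mul_of_nonneg_right (hinner j) (norm_nonneg _)
            _ ≤ (β / (1 - β)) * ((K₀ + K₁ * ‖G j‖) * η) :=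
                mul_le_mul_of_nonneg_left (hsm j hj) hb
      _ = K₀ * K * η * β / (1 - β) +
          K₁ * η * β / (1 - β) * ∑ k ∈ Finset.range K, ‖G k‖ := by
          have he : ∀ j ∈ Finset.range K, (β / (1 - β)) * ((K₀ + K₁ * ‖G j‖) * η)
              = K₀ * η * β / (1 - β) + (K₁ * η * β / (1 - β)) * ‖G j‖ := fun j _ => by ring
          rw [Finset.sum_congr rfl he, Finset.sum_add_distrib, Finset.sum_const,
            ← Finset.mul_sum, Finset.card_range, nsmul_eq_mul]
          ring
  linarith
end
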